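/- arXiv:1503.03430 — 5 statements merged into one kernel-verified Lean document; each statement's English description precedes it below -/
import Mathlib

section
/- If G is the triangular prism (the complement of the 6-cycle, i.e., two disjoint triangles joined by a perfect matching), then the set of 3-colourings of G partitions into exactly two Kempe equivalence classes. -/
open SimpleGraph

set_option maxRecDepth 10000

variable {V : Type*}

/-- Swap colours `a` and `b`. -/
def kswap {k : ℕ} (a b x : Fin k) : Fin k :=
  if x = a then b else if x = b then a else x

/-- A proper `k`-colouring of `G`. -/
def ProperCol {k : ℕ} (G : SimpleGraph V) (c : V → Fin k) : Prop :=
  ∀ ⦃u v : V⦄, G.Adj u v → c u ≠ c v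

/-- `v` lies in the `(a,b)`-component (Kempe chain) of `u` for the colouring `c`. -/
def KChain {k : ℕ} (G : SimpleGraph V) (c : V → Fin k) (a b : Fin k) (u v : V) : Prop :=
  Relation.ReflTransGen
    (fun x y => G.Adj x y ∧ (c x = a ∨ c x = b) ∧ (c y = a ∨ c y = b)) u v

open scoped Classical in
/-- `c'` is obtained from `c` by one Kempe change. -/
def KempeStep {k : ℕ} (G : SimpleGraph V) (c c' : V → Fin k) : Prop :=
  ∃ a b : Fin k, ∃ u : V, a ≠ b ∧ (c u = a ∨ c u = b) ∧
    c' = fun v => if KChain G c a b u v then kswap a b (c v) else c v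

/-- Kempe equivalence of colourings. -/
def KempeEquiv {k : ℕ} (G : SimpleGraph V) (c c' : V → Fin k) : Prop :=
  Relation.ReflTransGen (KempeStep G) c c'

/-- The triangular prism: two triangles 0,1,2 and 3,4,5 joined by the matching 0-3, 1-4, 2-5. -/
def prism : SimpleGraph (Fin 6) :=
  SimpleGraph.fromRel (fun u v =>
    (u, v) ∈ [((0 : Fin 6), (1 : Fin 6)), (0, 2), (1, 2), (3, 4), (3, 5), (4, 5),
      (0, 3), (1, 4), (2, 5)])

/-! ### Auxiliary material -/

instance prism.adjDec : DecidableRel prism.Adj := fun u v =>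
  decidable_of_iff' _ (SimpleGraph.fromRel_adj _ u v)

def S1 : List (Fin 6 → Fin 3) := [![0,1,2,1,2,0], ![0,2,1,2,1,0], ![1,0,2,0,2,1], ![1,2,0,2,0,1], ![2,0,1,0,1,2], ![2,1,0,1,0,2]]
def S2 : List (Fin 6 → Fin 3) := [![0,1,2,2,0,1], ![0,2,1,1,0,2], ![1,0,2,2,1,0], ![1,2,0,0,1,2], ![2,0,1,1,2,0], ![2,1,0,0,2,1]]

lemma properIff (c : Fin 6 → Fin 3) :
    ProperCol prism c ↔ ∀ u v, prism.Adj u v → c u ≠ c v := Iff.rfl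

lemma cover : ∀ c : Fin 6 → Fin 3,
    (∀ u v, prism.Adj u v → c u ≠ c v) → c ∈ S1 ++ S2 := by decide

lemma memProper : ∀ c ∈ S1 ++ S2, ∀ u v, prism.Adj u v → c u ≠ c v := by decide

/-- one allowed (reflexive) step of a Kempe chain -/
def PStep (c : Fin 6 → Fin 3) (a b : Fin 3) (x y : Fin 6) : Prop :=
  x = y ∨ (prism.Adj x y ∧ (c x = a ∨ c x = b) ∧ (c y = a ∨ c y = b))

instance : ∀ c a b x y, Decidable (PStep c a b x y) := fun _ _ _ _ _ =>
  instDecidableOr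

lemma pstep_chain {c : Fin 6 → Fin 3} {a b : Fin 3} {x y : Fin 6}
    (h : PStep c a b x y) : KChain prism c a b x y := by
  rcases h with h | h
  · exact h ▸ Relation.ReflTransGen.refl
  · exact Relation.ReflTransGen.single h

lemma path3 : ∀ c ∈ S1 ++ S2, ∀ a b : Fin 3, a ≠ b → ∀ u v : Fin 6,
    (c u = a ∨ c u = b) → (c v = a ∨ c v = b) →
    ∃ w₁ w₂ : Fin 6, PStep c a b u w₁ ∧ PStep c a b w₁ w₂ ∧ PStep c a b w₂ v := by
  decide

lemma kchain_colors {c : Fin 6 → Fin 3} {a b : Fin 3} {u v : Fin 6}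
    (h : KChain prism c a b u v) (hu : c u = a ∨ c u = b) : c v = a ∨ c v = b := by
  induction h with
  | refl => exact hu
  | tail _ h ih => exact h.2.2

lemma chain_iff {c : Fin 6 → Fin 3} (hc : ProperCol prism c) {a b : Fin 3}
    (hab : a ≠ b) {u : Fin 6} (hu : c u = a ∨ c u = b) (v : Fin 6) :
    KChain prism c a b u v ↔ (c v = a ∨ c v = b) := by
  constructor
  · exact fun h => kchain_colors h hu
  · intro hv
    obtain ⟨w₁, w₂, h1, h2, h3⟩ :=
      path3 c (cover c ((properIff c).1 hc)) a b hab u v hu hv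
    exact (pstep_chain h1).trans ((pstep_chain h2).trans (pstep_chain h3))

lemma kswap_fix : ∀ a b x : Fin 3, ¬(x = a ∨ x = b) → kswap a b x = x := by decide

lemma kswap_inj : ∀ a b x y : Fin 3, kswap a b x = kswap a b y → x = y := by decide

lemma proper_kswap {c : Fin 6 → Fin 3} (hc : ProperCol prism c) (a b : Fin 3) :
    ProperCol prism (kswap a b ∘ c) :=
  fun u v h he => hc h (kswap_inj _ _ _ _ he)

lemma fin3_cases : ∀ x y z a : Fin 3, x ≠ y → x ≠ z → y ≠ z →
    a = x ∨ a = y ∨ a = z := by decide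

lemma exists_color {c : Fin 6 → Fin 3} (hc : ProperCol prism c) (a : Fin 3) :
    ∃ u, c u = a := by
  have h01 : prism.Adj 0 1 := by decide
  have h02 : prism.Adj 0 2 := by decide
  have h12 : prism.Adj 1 2 := by decide
  rcases fin3_cases (c 0) (c 1) (c 2) a (hc h01) (hc h02) (hc h12) with h | h | h
  · exact ⟨0, h.symm⟩
  · exact ⟨1, h.symm⟩
  · exact ⟨2, h.symm⟩

lemma kempeStep_iff {c c' : Fin 6 → Fin 3} (hc : ProperCol prism c) :
    KempeStep prism c c' ↔ ∃ a b : Fin 3, a ≠ b ∧ c' = kswap a b ∘ c := by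
  constructor
  · rintro ⟨a, b, u, hab, hu, he⟩
    refine ⟨a, b, hab, ?_⟩
    subst he
    funext v
    by_cases hv : c v = a ∨ c v = b
    · rw [if_pos ((chain_iff hc hab hu v).2 hv)]; rfl
    · rw [if_neg (fun hk => hv ((chain_iff hc hab hu v).1 hk))]
      exact (kswap_fix a b (c v) hv).symm
  · rintro ⟨a, b, hab, he⟩
    obtain ⟨u, hu⟩ := exists_color hc a
    refine ⟨a, b, u, hab, Or.inl hu, ?_⟩
    subst he
    funext v
    by_cases hv : c v = a ∨ c v = b
    · rw [if_pos ((chain_iff hc hab (Or.inl hu) v).2 hv)]; rfl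
    · rw [if_neg (fun hk => hv ((chain_iff hc hab (Or.inl hu) v).1 hk))]
      exact kswap_fix a b (c v) hv

lemma step_mk {c : Fin 6 → Fin 3} (hc : ProperCol prism c) {a b : Fin 3}
    (hab : a ≠ b) : KempeStep prism c (kswap a b ∘ c) :=
  (kempeStep_iff hc).2 ⟨a, b, hab, rfl⟩

lemma closure1 : ∀ c ∈ S1, ∀ a b : Fin 3, a ≠ b → (kswap a b ∘ c) ∈ S1 := by decide

lemma inS1 : ∀ c', KempeEquiv prism ![0,1,2,1,2,0] c' → c' ∈ S1 := by
  intro c' h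
  induction h with
  | refl => decide
  | tail _ hstep ih =>
    have hp : ProperCol prism _ := (properIff _).2 (memProper _ (by
      simpa using Or.inl ih))
    obtain ⟨a, b, hab, he⟩ := (kempeStep_iff hp).1 hstep
    exact he ▸ closure1 _ ih a b hab

def Reach (t : Fin 6 → Fin 3) (c : Fin 6 → Fin 3) : Prop :=
  c = t ∨ ∃ a b : Fin 3, a ≠ b ∧ (kswap a b ∘ c = t ∨
    ∃ a' b' : Fin 3, a' ≠ b' ∧ kswap a' b' ∘ (kswap a b ∘ c) = t)

instance Reach.dec : ∀ t c, Decidable (Reach t c) := fun t c => by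
  unfold Reach; infer_instance

lemma reach1 : ∀ c ∈ S1, Reach ![0,1,2,1,2,0] c := by decide
lemma reach2 : ∀ c ∈ S2, Reach ![0,1,2,2,0,1] c := by decide

lemma equiv_of_reach {t c : Fin 6 → Fin 3} (hc : ProperCol prism c)
    (h : Reach t c) : KempeEquiv prism c t := by
  rcases h with h | ⟨a, b, hab, h | ⟨a', b', hab', h⟩⟩
  · exact h ▸ Relation.ReflTransGen.refl
  · exact Relation.ReflTransGen.single (h ▸ step_mk hc hab)
  · exact Relation.ReflTransGen.head (step_mk hc hab)
      (Relation.ReflTransGen.single (h ▸ step_mk (proper_kswap hc a b) hab'))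

/-- The 3-colourings of the triangular prism split into exactly two Kempe classes. -/
theorem prism_two_kempe_classes :
    ∃ c₁ c₂ : Fin 6 → Fin 3, ProperCol prism c₁ ∧ ProperCol prism c₂ ∧
      ¬ KempeEquiv prism c₁ c₂ ∧
      ∀ c : Fin 6 → Fin 3, ProperCol prism c →
        KempeEquiv prism c c₁ ∨ KempeEquiv prism c c₂ := by
  refine ⟨![0,1,2,1,2,0], ![0,1,2,2,0,1], (properIff _).2 (by decide),
    (properIff _).2 (by decide), ?_, ?_⟩
  · intro h
    have : (![0,1,2,2,0,1] : Fin 6 → Fin 3) ∈ S1 := inS1 _ h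
    revert this
    decide
  · intro c hc
    have hm := cover c ((properIff c).1 hc)
    rcases List.mem_append.1 hm with hm | hm
    · exact Or.inl (equiv_of_reach hc (reach1 c hm))
    · exact Or.inr (equiv_of_reach hc (reach2 c hm))
end

section
/- Let k ≥ 1, let x,y be non-adjacent vertices of a graph G, and let G' be obtained from G by identifying x and y (replacing them by a single vertex adjacent to all their neighbours). If all k-colourings of G' are Kempe equivalent, then all k-colourings c of G satisfying c(x) = c(y) are pairwise Kempe equivalent. -/
open SimpleGraph

variable {V : Type*}

/-- The graph obtained from `G` by identifying the vertices `x` and `y`: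
`y` is removed and `x` becomes adjacent to all of `N(x) ∪ N(y)`. -/
def identifyG (G : SimpleGraph V) (x y : V) : SimpleGraph {v : V // v ≠ y} :=
  SimpleGraph.fromRel (fun a b =>
    G.Adj a.1 b.1 ∨ (a.1 = x ∧ G.Adj y b.1) ∨ (b.1 = x ∧ G.Adj a.1 y))


variable {k : ℕ}

lemma kswap_mem {a b z : Fin k} : (kswap a b z = a ∨ kswap a b z = b) ↔ (z = a ∨ z = b) := by
  unfold kswap; split_ifs <;> simp_all

lemma chain_symm {G : SimpleGraph V} {c : V → Fin k} {a b : Fin k} {u v : V}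
    (h : KChain G c a b u v) : KChain G c a b v u := by
  refine @Std.Symm.symm _ _ (@Relation.ReflTransGen.symmetric _ _ ⟨?_⟩) _ _ h
  intro p q ⟨h1, h2, h3⟩; exact ⟨h1.symm, h3, h2⟩

lemma chain_trans {G : SimpleGraph V} {c : V → Fin k} {a b : Fin k} {u v w : V}
    (h : KChain G c a b u v) (h' : KChain G c a b v w) : KChain G c a b u w :=
  Relation.ReflTransGen.trans h h'

lemma chain_col {G : SimpleGraph V} {c : V → Fin k} {a b : Fin k} {u v : V}
    (h : KChain G c a b u v) (hu : c u = a ∨ c u = b) : c v = a ∨ c v = b := by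
  induction h with
  | refl => exact hu
  | tail _ step ih => exact step.2.2

lemma chain_congr {G : SimpleGraph V} {c c' : V → Fin k} {a b : Fin k}
    (h : ∀ v, (c v = a ∨ c v = b) ↔ (c' v = a ∨ c' v = b)) (u v : V) :
    KChain G c a b u v ↔ KChain G c' a b u v := by
  unfold KChain
  constructor <;> refine fun hc => Relation.ReflTransGen.mono ?_ _ _ hc
  · exact fun p q ⟨h1, h2, h3⟩ => ⟨h1, (h p).1 h2, (h q).1 h3⟩
  · exact fun p q ⟨h1, h2, h3⟩ => ⟨h1, (h p).2 h2, (h q).2 h3⟩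

open scoped Classical in
lemma swap_list (G : SimpleGraph V) (c : V → Fin k) (a b : Fin k) (hab : a ≠ b) (L : List V)
    (hcol : ∀ z ∈ L, c z = a ∨ c z = b)
    (hpw : L.Pairwise (fun z z' => ¬ KChain G c a b z z')) :
    KempeEquiv G c (fun v => if ∃ z ∈ L, KChain G c a b z v then kswap a b (c v) else c v) := by
  induction L generalizing c with
  | nil =>
    have : (fun v => if ∃ z ∈ ([] : List V), KChain G c a b z v then kswap a b (c v) else c v)
        = c := by funext v; simp
    rw [this]
    exact Relation.ReflTransGen.refl
  | cons z L ih =>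
    set c1 : V → Fin k := fun v => if KChain G c a b z v then kswap a b (c v) else c v with hc1
    have hmem : ∀ v, (c v = a ∨ c v = b) ↔ (c1 v = a ∨ c1 v = b) := by
      intro v; rw [hc1]; dsimp only; split_ifs with hv
      · exact kswap_mem.symm
      · rfl
    have hcg := chain_congr (G := G) hmem
    have step1 : KempeStep G c c1 :=
      ⟨a, b, z, hab, hcol z List.mem_cons_self, by
        funext v; rw [hc1]⟩
    have hcol1 : ∀ z' ∈ L, c1 z' = a ∨ c1 z' = b := fun z' hz' =>
      (hmem z').1 (hcol z' (List.mem_cons_of_mem _ hz'))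
    have hpw1 : L.Pairwise (fun p q => ¬ KChain G c1 a b p q) := by
      refine (List.pairwise_cons.1 hpw).2.imp ?_
      intro p q hpq hK; exact hpq ((hcg p q).2 hK)
    have ihr := ih c1 hcol1 hpw1
    have hdisj : ∀ v, KChain G c a b z v → ∀ z' ∈ L, ¬ KChain G c a b z' v := by
      intro v hzv z' hz' hz'v
      exact (List.pairwise_cons.1 hpw).1 z' hz' (chain_trans hzv (chain_symm hz'v))
    have heq : (fun v => if ∃ z' ∈ L, KChain G c1 a b z' v then kswap a b (c1 v) else c1 v)
        = (fun v => if ∃ z' ∈ z :: L, KChain G c a b z' v then kswap a b (c v) else c v) := by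
      funext v
      by_cases h1 : KChain G c a b z v
      · have h2 : ¬ ∃ z' ∈ L, KChain G c1 a b z' v := by
          rintro ⟨z', hz', hK⟩
          exact hdisj v h1 z' hz' ((hcg z' v).2 hK)
        rw [if_neg h2, if_pos ⟨z, List.mem_cons_self, h1⟩, hc1]
        dsimp only; rw [if_pos h1]
      · have hc1v : c1 v = c v := by rw [hc1]; dsimp only; rw [if_neg h1]
        by_cases h2 : ∃ z' ∈ L, KChain G c a b z' v
        · have h2' : ∃ z' ∈ L, KChain G c1 a b z' v := by
            obtain ⟨z', hz', hK⟩ := h2; exact ⟨z', hz', (hcg z' v).1 hK⟩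
          obtain ⟨z', hz', hK⟩ := h2
          rw [if_pos h2', if_pos (⟨z', List.mem_cons_of_mem _ hz', hK⟩ :
            ∃ z' ∈ z :: L, KChain G c a b z' v), hc1v]
        · have h2' : ¬ ∃ z' ∈ L, KChain G c1 a b z' v := by
            rintro ⟨z', hz', hK⟩; exact h2 ⟨z', hz', (hcg z' v).2 hK⟩
          have h3 : ¬ ∃ z' ∈ z :: L, KChain G c a b z' v := by
            rintro ⟨z', hz', hK⟩
            rcases List.mem_cons.1 hz' with rfl | hz'
            · exact h1 hK
            · exact h2 ⟨z', hz', hK⟩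
          rw [if_neg h2', if_neg h3, hc1v]
    rw [← heq]
    exact Relation.ReflTransGen.head step1 ihr


section Identify

variable {G : SimpleGraph V} {x y : V} (hxy : x ≠ y)

open scoped Classical in
/-- The projection `V → {v // v ≠ y}` sending `y` to `x`. -/
noncomputable def idf (hxy : x ≠ y) (v : V) : {v : V // v ≠ y} :=
  if h : v = y then ⟨x, hxy⟩ else ⟨v, h⟩

lemma idf_ne {v : V} (h : v ≠ y) : idf hxy v = ⟨v, h⟩ := by unfold idf; exact dif_neg h

lemma idf_y : idf hxy y = ⟨x, hxy⟩ := by unfold idf; exact dif_pos rfl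

lemma idf_coe (p : {v : V // v ≠ y}) : idf hxy p.1 = p := by
  rw [idf_ne hxy p.2]

lemma idf_hom (hna : ¬ G.Adj x y) {v w : V} (hadj : G.Adj v w) :
    (identifyG G x y).Adj (idf hxy v) (idf hxy w) := by
  unfold identifyG
  rw [SimpleGraph.fromRel_adj]
  by_cases hv : v = y <;> by_cases hw : w = y
  · exact absurd (hv ▸ hw ▸ hadj) (G.irrefl)
  · subst hv
    rw [idf_y, idf_ne hxy hw]
    refine ⟨?_, Or.inl (Or.inr (Or.inl ⟨rfl, hadj⟩))⟩
    intro hc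
    have : x = w := congrArg Subtype.val hc
    exact hna (this ▸ hadj.symm)
  · subst hw
    rw [idf_y, idf_ne hxy hv]
    refine ⟨?_, Or.inl (Or.inr (Or.inr ⟨rfl, hadj⟩))⟩
    intro hc
    have : v = x := congrArg Subtype.val hc
    exact hna (this ▸ hadj)
  · rw [idf_ne hxy hv, idf_ne hxy hw]
    exact ⟨fun hc => hadj.ne (congrArg Subtype.val hc), Or.inl (Or.inl hadj)⟩

lemma edge_lift {p q : {v : V // v ≠ y}} (hadj : (identifyG G x y).Adj p q) :
    ∃ v w : V, idf hxy v = p ∧ idf hxy w = q ∧ G.Adj v w := by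
  unfold identifyG at hadj
  rw [SimpleGraph.fromRel_adj] at hadj
  obtain ⟨hne, hrel⟩ := hadj
  rcases hrel with (h | ⟨hp, hyq⟩ | ⟨hq, hpy⟩) | (h | ⟨hq, hyp⟩ | ⟨hp, hqy⟩)
  · exact ⟨p.1, q.1, idf_coe hxy p, idf_coe hxy q, h⟩
  · exact ⟨y, q.1, by rw [idf_y]; exact (Subtype.ext hp).symm, idf_coe hxy q, hyq⟩
  · exact ⟨p.1, y, idf_coe hxy p, by rw [idf_y]; exact (Subtype.ext hq).symm, hpy⟩
  · exact ⟨p.1, q.1, idf_coe hxy p, idf_coe hxy q, h.symm⟩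
  · exact ⟨p.1, y, idf_coe hxy p, by rw [idf_y]; exact (Subtype.ext hq).symm, hyp.symm⟩
  · exact ⟨y, q.1, by rw [idf_y]; exact (Subtype.ext hp).symm, idf_coe hxy q, hqy.symm⟩

/-- Extend a colouring of the identified graph to `G`. -/
noncomputable def ExtCol (hxy : x ≠ y) (d : {v : V // v ≠ y} → Fin k) : V → Fin k :=
  fun v => d (idf hxy v)

lemma chain_fwd (hna : ¬ G.Adj x y) {d : {v : V // v ≠ y} → Fin k} {a b : Fin k} {v w : V}
    (h : KChain G (ExtCol hxy d) a b v w) :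
    KChain (identifyG G x y) d a b (idf hxy v) (idf hxy w) := by
  refine Relation.ReflTransGen.lift (idf hxy) ?_ _ _ h
  rintro p q ⟨h1, h2, h3⟩
  exact ⟨idf_hom hxy hna h1, h2, h3⟩

end Identify

section Identify2

variable {G : SimpleGraph V} {x y : V} (hxy : x ≠ y)

lemma chain_back_A {d : {v : V // v ≠ y} → Fin k} {a b : Fin k} {u : {v : V // v ≠ y}}
    (hX : ¬ KChain (identifyG G x y) d a b u ⟨x, hxy⟩)
    {p : {v : V // v ≠ y}} (h : KChain (identifyG G x y) d a b u p) :
    ∀ v : V, idf hxy v = p → KChain G (ExtCol hxy d) a b u.1 v := by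
  induction h with
  | refl =>
    intro v hv
    by_cases hvy : v = y
    · subst hvy
      rw [idf_y] at hv
      exact absurd (hv ▸ Relation.ReflTransGen.refl) hX
    · rw [idf_ne hxy hvy] at hv
      have : v = u.1 := congrArg Subtype.val hv
      subst this
      exact Relation.ReflTransGen.refl
  | @tail p' q hc step ih =>
    intro w hw
    have hq : q ≠ ⟨x, hxy⟩ := by
      intro hqq
      exact hX (hqq ▸ (hc.tail step))
    obtain ⟨v', w', hv', hw', hadj⟩ := edge_lift hxy step.1
    have hwy : w ≠ y := by
      intro hh; rw [hh, idf_y] at hw; exact hq hw.symm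
    have hw'y : w' ≠ y := by
      intro hh; rw [hh, idf_y] at hw'; exact hq hw'.symm
    rw [idf_ne hxy hwy] at hw
    rw [idf_ne hxy hw'y] at hw'
    have hww : w = w' := by
      have h1 : w = q.1 := congrArg Subtype.val hw
      have h2 : w' = q.1 := congrArg Subtype.val hw'
      rw [h1, h2]
    subst hww
    refine (ih v' hv').tail ⟨hadj, ?_, ?_⟩
    · show d (idf hxy v') = a ∨ d (idf hxy v') = b
      rw [hv']; exact step.2.1
    · show d (idf hxy w) = a ∨ d (idf hxy w) = b
      rw [idf_ne hxy hwy, hw]; exact step.2.2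

lemma chain_back_B {d : {v : V // v ≠ y} → Fin k} {a b : Fin k} {u : {v : V // v ≠ y}}
    {p : {v : V // v ≠ y}} (h : KChain (identifyG G x y) d a b u p) :
    ∀ v : V, idf hxy v = p →
      KChain G (ExtCol hxy d) a b u.1 v ∨ KChain G (ExtCol hxy d) a b x v ∨
        KChain G (ExtCol hxy d) a b y v := by
  induction h with
  | refl =>
    intro v hv
    by_cases hvy : v = y
    · subst hvy; exact Or.inr (Or.inr Relation.ReflTransGen.refl)
    · rw [idf_ne hxy hvy] at hv
      have hvu : v = u.1 := congrArg Subtype.val hv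
      subst hvu
      exact Or.inl Relation.ReflTransGen.refl
  | @tail p' q hc step ih =>
    intro w hw
    by_cases hwx : w = x
    · subst hwx; exact Or.inr (Or.inl Relation.ReflTransGen.refl)
    by_cases hwy : w = y
    · subst hwy; exact Or.inr (Or.inr Relation.ReflTransGen.refl)
    obtain ⟨v', w', hv', hw', hadj⟩ := edge_lift hxy step.1
    rw [idf_ne hxy hwy] at hw
    have hqx : q.1 ≠ x := by
      intro hh
      exact hwx (by rw [← hh]; exact congrArg Subtype.val hw)
    have hw'y : w' ≠ y := by
      intro hh; rw [hh, idf_y] at hw'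
      exact hqx (congrArg Subtype.val hw'.symm)
    rw [idf_ne hxy hw'y] at hw'
    have hww : w = w' := by
      have h1 : w = q.1 := congrArg Subtype.val hw
      have h2 : w' = q.1 := congrArg Subtype.val hw'
      rw [h1, h2]
    subst hww
    have hstep : G.Adj v' w ∧ (ExtCol hxy d v' = a ∨ ExtCol hxy d v' = b) ∧
        (ExtCol hxy d w = a ∨ ExtCol hxy d w = b) := by
      refine ⟨hadj, ?_, ?_⟩
      · show d (idf hxy v') = a ∨ d (idf hxy v') = b
        rw [hv']; exact step.2.1
      · show d (idf hxy w) = a ∨ d (idf hxy w) = b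
        rw [idf_ne hxy hwy, hw]; exact step.2.2
    rcases ih v' hv' with hh | hh | hh
    · exact Or.inl (hh.tail hstep)
    · exact Or.inr (Or.inl (hh.tail hstep))
    · exact Or.inr (Or.inr (hh.tail hstep))

end Identify2

section Lift

variable {G : SimpleGraph V} {x y : V} (hxy : x ≠ y)

lemma lift_step (hna : ¬ G.Adj x y) {d d' : {v : V // v ≠ y} → Fin k}
    (hs : KempeStep (identifyG G x y) d d') :
    KempeEquiv G (ExtCol hxy d) (ExtCol hxy d') := by
  classical
  obtain ⟨a, b, u, hab, hu, hd'⟩ := hs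
  set D := ExtCol hxy d with hD
  have hDu : D u.1 = a ∨ D u.1 = b := by
    show d (idf hxy u.1) = a ∨ d (idf hxy u.1) = b
    rw [idf_coe hxy u]; exact hu
  by_cases hX : KChain (identifyG G x y) d a b u ⟨x, hxy⟩
  · -- the component of `u` contains the identified vertex
    have hdx : d ⟨x, hxy⟩ = a ∨ d ⟨x, hxy⟩ = b := chain_col hX hu
    have hDx : D x = a ∨ D x = b := by
      show d (idf hxy x) = a ∨ d (idf hxy x) = b
      rw [idf_ne hxy hxy]; exact hdx
    have hDy : D y = a ∨ D y = b := by
      show d (idf hxy y) = a ∨ d (idf hxy y) = b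
      rw [idf_y]; exact hdx
    have hQ : ∀ v : V, KChain (identifyG G x y) d a b u (idf hxy v) ↔
        (KChain G D a b u.1 v ∨ KChain G D a b x v ∨ KChain G D a b y v) := by
      intro v
      constructor
      · intro hh; exact chain_back_B hxy hh v rfl
      · rintro (hh | hh | hh)
        · have h2 := chain_fwd hxy hna hh; rwa [idf_coe hxy u] at h2
        · have h2 := chain_fwd hxy hna hh; rw [idf_ne hxy hxy] at h2
          exact chain_trans hX h2
        · have h2 := chain_fwd hxy hna hh; rw [idf_y] at h2
          exact chain_trans hX h2
    have key : ∀ L : List V, (∀ z ∈ L, D z = a ∨ D z = b) →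
        L.Pairwise (fun z z' => ¬ KChain G D a b z z') →
        (∀ v, (∃ z ∈ L, KChain G D a b z v) ↔
          (KChain G D a b u.1 v ∨ KChain G D a b x v ∨ KChain G D a b y v)) →
        KempeEquiv G D (ExtCol hxy d') := by
      intro L hcol hpw hiff
      have hsw := swap_list G D a b hab L hcol hpw
      have heq : ExtCol hxy d'
          = fun v => if ∃ z ∈ L, KChain G D a b z v then kswap a b (D v) else D v := by
        funext v
        show d' (idf hxy v) = _
        rw [hd']
        dsimp only
        by_cases hv : ∃ z ∈ L, KChain G D a b z v
        · rw [if_pos hv, if_pos ((hQ v).2 ((hiff v).1 hv))]; rfl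
        · rw [if_neg hv, if_neg (fun hc => hv ((hiff v).2 ((hQ v).1 hc)))]; rfl
      rw [heq]; exact hsw
    by_cases hux : KChain G D a b u.1 x <;> by_cases huy : KChain G D a b u.1 y
    · refine key [u.1] (by simpa using hDu) (List.pairwise_singleton _ _) (fun v => ?_)
      constructor
      · rintro ⟨z, hz, hh⟩
        simp only [List.mem_singleton] at hz
        subst hz; exact Or.inl hh
      · rintro (hh | hh | hh)
        · exact ⟨u.1, List.mem_singleton_self _, hh⟩
        · exact ⟨u.1, List.mem_singleton_self _, chain_trans hux hh⟩
        · exact ⟨u.1, List.mem_singleton_self _, chain_trans huy hh⟩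
    · refine key [u.1, y] (by simp [hDu, hDy]) ?_ (fun v => ?_)
      · exact List.pairwise_cons.2 ⟨by simpa using huy, List.pairwise_singleton _ _⟩
      constructor
      · rintro ⟨z, hz, hh⟩
        simp only [List.mem_cons, List.mem_singleton, List.not_mem_nil, or_false] at hz
        rcases hz with rfl | rfl
        · exact Or.inl hh
        · exact Or.inr (Or.inr hh)
      · rintro (hh | hh | hh)
        · exact ⟨u.1, by simp, hh⟩
        · exact ⟨u.1, by simp, chain_trans hux hh⟩
        · exact ⟨y, by simp, hh⟩
    · refine key [u.1, x] (by simp [hDu, hDx]) ?_ (fun v => ?_)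
      · exact List.pairwise_cons.2 ⟨by simpa using hux, List.pairwise_singleton _ _⟩
      constructor
      · rintro ⟨z, hz, hh⟩
        simp only [List.mem_cons, List.mem_singleton, List.not_mem_nil, or_false] at hz
        rcases hz with rfl | rfl
        · exact Or.inl hh
        · exact Or.inr (Or.inl hh)
      · rintro (hh | hh | hh)
        · exact ⟨u.1, by simp, hh⟩
        · exact ⟨x, by simp, hh⟩
        · exact ⟨u.1, by simp, chain_trans huy hh⟩
    · by_cases hxy2 : KChain G D a b x y
      · refine key [u.1, x] (by simp [hDu, hDx]) ?_ (fun v => ?_)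
        · exact List.pairwise_cons.2 ⟨by simpa using hux, List.pairwise_singleton _ _⟩
        constructor
        · rintro ⟨z, hz, hh⟩
          simp only [List.mem_cons, List.mem_singleton, List.not_mem_nil, or_false] at hz
          rcases hz with rfl | rfl
          · exact Or.inl hh
          · exact Or.inr (Or.inl hh)
        · rintro (hh | hh | hh)
          · exact ⟨u.1, by simp, hh⟩
          · exact ⟨x, by simp, hh⟩
          · exact ⟨x, by simp, chain_trans hxy2 hh⟩
      · refine key [u.1, x, y] (by simp [hDu, hDx, hDy]) ?_ (fun v => ?_)
        · refine List.pairwise_cons.2 ⟨?_, List.pairwise_cons.2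
            ⟨by simpa using hxy2, List.pairwise_singleton _ _⟩⟩
          intro z hz
          simp only [List.mem_cons, List.mem_singleton, List.not_mem_nil, or_false] at hz
          rcases hz with rfl | rfl
          · exact hux
          · exact huy
        constructor
        · rintro ⟨z, hz, hh⟩
          simp only [List.mem_cons, List.mem_singleton, List.not_mem_nil, or_false] at hz
          rcases hz with rfl | rfl | rfl
          · exact Or.inl hh
          · exact Or.inr (Or.inl hh)
          · exact Or.inr (Or.inr hh)
        · rintro (hh | hh | hh)
          · exact ⟨u.1, by simp, hh⟩
          · exact ⟨x, by simp, hh⟩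
          · exact ⟨y, by simp, hh⟩
  · -- the component of `u` avoids the identified vertex: a single Kempe step
    refine Relation.ReflTransGen.single ⟨a, b, u.1, hab, hDu, ?_⟩
    funext v
    show d' (idf hxy v) = _
    rw [hd']
    dsimp only
    by_cases hv : KChain G D a b u.1 v
    · have h2 := chain_fwd hxy hna hv
      rw [idf_coe hxy u] at h2
      rw [if_pos hv, if_pos h2]; rfl
    · have h2 : ¬ KChain (identifyG G x y) d a b u (idf hxy v) := by
        intro hc
        exact hv (chain_back_A hxy hX hc v rfl)
      rw [if_neg h2, if_neg hv]; rfl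

lemma lift_equiv (hna : ¬ G.Adj x y) {d d' : {v : V // v ≠ y} → Fin k}
    (hs : KempeEquiv (identifyG G x y) d d') :
    KempeEquiv G (ExtCol hxy d) (ExtCol hxy d') := by
  induction hs with
  | refl => exact Relation.ReflTransGen.refl
  | tail _ step ih => exact Relation.ReflTransGen.trans ih (lift_step hxy hna step)

end Lift

theorem identify_kempe_equiv' {V : Type*} {k : ℕ} (G : SimpleGraph V) (x y : V)
    (hxy : x ≠ y) (hna : ¬ G.Adj x y)
    (h : ∀ c c' : {v : V // v ≠ y} → Fin k, ProperCol (identifyG G x y) c →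
      ProperCol (identifyG G x y) c' → KempeEquiv (identifyG G x y) c c')
    (c₁ c₂ : V → Fin k) (h₁ : ProperCol G c₁) (h₂ : ProperCol G c₂)
    (e₁ : c₁ x = c₁ y) (e₂ : c₂ x = c₂ y) :
    KempeEquiv G c₁ c₂ := by
  classical
  let F : (V → Fin k) → ({v : V // v ≠ y} → Fin k) := fun c p => c p.1
  have hproper : ∀ c : V → Fin k, ProperCol G c → c x = c y →
      ProperCol (identifyG G x y) (F c) := by
    intro c hc hcx p q hadj
    rw [identifyG, SimpleGraph.fromRel_adj] at hadj
    obtain ⟨hne, hrel⟩ := hadj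
    show c p.1 ≠ c q.1
    rcases hrel with (hh | ⟨hp, hyq⟩ | ⟨hq, hpy⟩) | (hh | ⟨hq, hyp⟩ | ⟨hp, hqy⟩)
    · exact hc hh
    · rw [hp, hcx]; exact hc hyq
    · rw [hq, hcx]; exact hc hpy
    · exact (hc hh).symm
    · rw [hq, hcx]; exact (hc hyp).symm
    · rw [hp, hcx]; exact (hc hqy).symm
  have hext : ∀ c : V → Fin k, c x = c y → ExtCol hxy (F c) = c := by
    intro c hc
    funext v
    show F c (idf hxy v) = c v
    by_cases hv : v = y
    · subst hv; rw [idf_y]; exact hc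
    · rw [idf_ne hxy hv]
  have hKE := h (F c₁) (F c₂) (hproper c₁ h₁ e₁) (hproper c₂ h₂ e₂)
  have hlift := lift_equiv hxy hna hKE
  rwa [hext c₁ e₁, hext c₂ e₂] at hlift

/-- If all `k`-colourings of the graph `G'` obtained from `G` by identifying two non-adjacent
vertices `x, y` are Kempe equivalent, then all `k`-colourings of `G` assigning `x` and `y`
the same colour are Kempe equivalent. -/
theorem identify_kempe_equiv {V : Type*} (k : ℕ) (hk : 1 ≤ k)
    (G : SimpleGraph V) (x y : V) (hxy : x ≠ y) (hna : ¬ G.Adj x y)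
    (h : ∀ c c' : {v : V // v ≠ y} → Fin k, ProperCol (identifyG G x y) c →
      ProperCol (identifyG G x y) c' → KempeEquiv (identifyG G x y) c c')
    (c₁ c₂ : V → Fin k) (h₁ : ProperCol G c₁) (h₂ : ProperCol G c₂)
    (e₁ : c₁ x = c₁ y) (e₂ : c₂ x = c₂ y) :
    KempeEquiv G c₁ c₂ :=
  identify_kempe_equiv' G x y hxy hna h c₁ c₂ h₁ h₂ e₁ e₂
end

section
/- Let k ≥ 3 and let G be a 3-connected graph of maximum degree at most k. If α and β are k-colourings of G for which there exist two vertices u, v with a common neighbour such that α(u) = α(v) and β(u) = β(v), then α and β are Kempe equivalent. -/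
open SimpleGraph

variable {V : Type*}

/-- `G` is 3-connected: at least 4 vertices and deleting any at most 2 vertices
leaves a connected graph. -/
def ThreeConnected (G : SimpleGraph V) [Fintype V] : Prop :=
  4 ≤ Fintype.card V ∧ ∀ S : Set V, S.ncard ≤ 2 → (G.induce Sᶜ).Connected


namespace KempeAux

open scoped Classical

variable {k : ℕ}

lemma kswap_left (a b : Fin k) : kswap a b a = b := by simp [kswap]

lemma kswap_right (a b : Fin k) : kswap a b b = a := by
  by_cases h : b = a <;> simp [kswap, h]

lemma kswap_other {a b x : Fin k} (hx : x ≠ a) (hx' : x ≠ b) : kswap a b x = x := by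
  simp [kswap, hx, hx']

lemma kswap_mem {a b x : Fin k} (h : x = a ∨ x = b) :
    kswap a b x = a ∨ kswap a b x = b := by
  rcases h with h | h <;> subst h
  · rw [kswap_left]; exact Or.inr rfl
  · rw [kswap_right]; exact Or.inl rfl

lemma kswap_not_mem {a b x : Fin k} (hx : ¬ (x = a ∨ x = b)) :
    ¬ (kswap a b x = a ∨ kswap a b x = b) := by
  push_neg at hx ⊢
  rw [kswap_other hx.1 hx.2]; exact hx

lemma kswap_invol (a b x : Fin k) : kswap a b (kswap a b x) = x := by
  by_cases h1 : x = a
  · subst h1; rw [kswap_left, kswap_right]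
  · by_cases h2 : x = b
    · subst h2; rw [kswap_right, kswap_left]
    · rw [kswap_other h1 h2, kswap_other h1 h2]

lemma kswap_inj {a b x y : Fin k} (h : kswap a b x = kswap a b y) : x = y := by
  have := congrArg (kswap a b) h
  rwa [kswap_invol, kswap_invol] at this

lemma kswap_comm (a b x : Fin k) : kswap a b x = kswap b a x := by
  unfold kswap; split_ifs <;> simp_all

section

variable {G : SimpleGraph V} {c c' : V → Fin k} {a b : Fin k} {z x y : V}

lemma kchain_colour_mem (h : KChain G c a b z x) (hz : c z = a ∨ c z = b) :
    c x = a ∨ c x = b := by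
  induction h with
  | refl => exact hz
  | tail _ h ih => exact h.2.2

lemma kchain_symm_rel :
    Symmetric (fun x y => G.Adj x y ∧ (c x = a ∨ c x = b) ∧ (c y = a ∨ c y = b)) := by
  intro x y ⟨h1, h2, h3⟩; exact ⟨h1.symm, h3, h2⟩

lemma kchain_symm (h : KChain G c a b z x) : KChain G c a b x z :=
  by
  haveI : Std.Symm (fun x y => G.Adj x y ∧ (c x = a ∨ c x = b) ∧ (c y = a ∨ c y = b)) :=
    ⟨fun _ _ hh => kchain_symm_rel hh⟩
  exact Relation.ReflTransGen.stdSymm.symm _ _ h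

lemma kchain_trans (h : KChain G c a b z x) (h' : KChain G c a b x y) :
    KChain G c a b z y := Relation.ReflTransGen.trans h h'

/-- chains only depend on `{a,b}`-membership of the colouring. -/
lemma kchain_congr_mem
    (hmem : ∀ t : V, (c t = a ∨ c t = b) ↔ (c' t = a ∨ c' t = b)) :
    KChain G c a b z x ↔ KChain G c' a b z x := by
  constructor <;> intro h
  · induction h with
    | refl => exact Relation.ReflTransGen.refl
    | tail _ h ih =>
        exact ih.tail ⟨h.1, (hmem _).1 h.2.1, (hmem _).1 h.2.2⟩
  · induction h with
    | refl => exact Relation.ReflTransGen.refl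
    | tail _ h ih =>
        exact ih.tail ⟨h.1, (hmem _).2 h.2.1, (hmem _).2 h.2.2⟩

lemma kchain_mono {G' : SimpleGraph V} (hle : ∀ ⦃s t : V⦄, G'.Adj s t → G.Adj s t)
    (h : KChain G' c a b z x) : KChain G c a b z x := by
  induction h with
  | refl => exact Relation.ReflTransGen.refl
  | tail _ h ih => exact ih.tail ⟨hle h.1, h.2.1, h.2.2⟩

/-- if no neighbour of `z` is coloured `a` or `b`, the chain of `z` is trivial. -/
lemma kchain_trivial (hnb : ∀ t, G.Adj z t → ¬ (c t = a ∨ c t = b))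
    (h : KChain G c a b z x) : x = z := by
  rcases Relation.ReflTransGen.cases_head h with h | ⟨y, hy, _⟩
  · exact h.symm
  · exact absurd hy.2.2 (hnb _ hy.1)

end

/-- the restriction of `G` to vertices in `B` (as a graph on the same vertex set). -/
def restr (G : SimpleGraph V) (B : Set V) : SimpleGraph V where
  Adj x y := x ∈ B ∧ y ∈ B ∧ G.Adj x y
  symm := ⟨fun x y ⟨hx, hy, h⟩ => ⟨hy, hx, h.symm⟩⟩
  loopless := ⟨fun x ⟨_, _, h⟩ => G.loopless.irrefl x h⟩

lemma restr_adj {G : SimpleGraph V} {B : Set V} {x y : V} :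
    (restr G B).Adj x y ↔ x ∈ B ∧ y ∈ B ∧ G.Adj x y := Iff.rfl

/-- one Kempe change with all data inside `B`. -/
def StepOn (Γ : SimpleGraph V) (B : Set V) (c c' : V → Fin k) : Prop :=
  ∃ a b : Fin k, ∃ z : V, a ≠ b ∧ z ∈ B ∧ (c z = a ∨ c z = b) ∧
    ∀ x, c' x = if KChain (restr Γ B) c a b z x then kswap a b (c x) else c x

section

variable {Γ : SimpleGraph V} {B : Set V} {c c' : V → Fin k} {a b : Fin k} {z x y p : V}

lemma stepOn_kempeStep (h : StepOn Γ B c c') : KempeStep (restr Γ B) c c' := by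
  obtain ⟨a, b, z, hab, _, hz, hfor⟩ := h
  exact ⟨a, b, z, hab, hz, funext hfor⟩

lemma kchain_restr_mem (hz : z ∈ B) (h : KChain (restr Γ B) c a b z x) : x ∈ B := by
  induction h with
  | refl => exact hz
  | tail _ h ih => exact h.1.2.1

lemma stepOn_off (h : StepOn Γ B c c') (hx : x ∉ B) : c' x = c x := by
  obtain ⟨a, b, z, hab, hzB, hz, hfor⟩ := h
  rw [hfor x, if_neg (fun hch => hx (kchain_restr_mem hzB hch))]

lemma properCol_mono {Γ' : SimpleGraph V} (hle : ∀ ⦃s t : V⦄, Γ'.Adj s t → Γ.Adj s t)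
    (h : ProperCol Γ c) : ProperCol Γ' c := fun _ _ hadj => h (hle hadj)

lemma proper_kempeStep (hc : ProperCol Γ c) (h : KempeStep Γ c c') : ProperCol Γ c' := by
  obtain ⟨a, b, z, hab, hz, rfl⟩ := h
  intro x y hxy
  by_cases hx : KChain Γ c a b z x <;> by_cases hy : KChain Γ c a b z y
  · simp only [if_pos hx, if_pos hy]
    exact fun h => hc hxy (kswap_inj h)
  · simp only [if_pos hx, if_neg hy]
    have hcx : c x = a ∨ c x = b := kchain_colour_mem hx hz
    have hcy : ¬ (c y = a ∨ c y = b) := fun hm => hy (hx.tail ⟨hxy, hcx, hm⟩)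
    exact fun h => hcy (h ▸ kswap_mem hcx)
  · simp only [if_neg hx, if_pos hy]
    have hcy : c y = a ∨ c y = b := kchain_colour_mem hy hz
    have hcx : ¬ (c x = a ∨ c x = b) := fun hm => hx (hy.tail ⟨hxy.symm, hcy, hm⟩)
    exact fun h => hcx (h.symm ▸ kswap_mem hcy)
  · simp only [if_neg hx, if_neg hy]; exact hc hxy

lemma proper_stepOn (hc : ProperCol (restr Γ B) c) (h : StepOn Γ B c c') :
    ProperCol (restr Γ B) c' := proper_kempeStep hc (stepOn_kempeStep h)

/-- recolouring a single vertex, when no conflict arises, is a Kempe change. -/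
lemma stepOn_update (hp : p ∈ B) {d : Fin k} (hd : d ≠ c p)
    (hnb : ∀ t, (restr Γ B).Adj p t → c t ≠ c p ∧ c t ≠ d) :
    StepOn Γ B c (Function.update c p d) := by
  refine ⟨c p, d, p, fun h => hd h.symm, hp, Or.inl rfl, fun x => ?_⟩
  by_cases hx : x = p
  · have hch : KChain (restr Γ B) c (c p) d p p := Relation.ReflTransGen.refl
    rw [hx, Function.update_self, if_pos hch, kswap_left]
  · rw [Function.update_of_ne hx]
    rw [if_neg (fun hch => hx (kchain_trivial (fun t ht hm => ?_) hch))]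
    rcases hm with hm | hm
    · exact (hnb t ht).1 hm
    · exact (hnb t ht).2 hm

lemma stepOn_swap (hab : a ≠ b) (hzB : z ∈ B) (hz : c z = a ∨ c z = b) :
    StepOn Γ B c
      (fun x => if KChain (restr Γ B) c a b z x then kswap a b (c x) else c x) :=
  ⟨a, b, z, hab, hzB, hz, fun _ => rfl⟩

end

section Lift

variable {Γ : SimpleGraph V} {B : Set V} {c c' : V → Fin k} {a b : Fin k} {z x y p : V}

/-- if `p` is not coloured `a` or `b`, chains avoid `p`. -/
lemma kchain_avoid (hz : z ≠ p) (hp : ¬(c p = a ∨ c p = b))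
    (h : KChain (restr Γ B) c a b z x) :
    x ≠ p ∧ KChain (restr Γ (B \ {p})) c a b z x := by
  induction h with
  | refl => exact ⟨hz, Relation.ReflTransGen.refl⟩
  | tail _ hq ih =>
      rename_i q x' hqx
      have hx'p : x' ≠ p := fun h => hp (h ▸ hq.2.2)
      exact ⟨hx'p, ih.2.tail ⟨⟨⟨hq.1.1, ih.1⟩, ⟨hq.1.2.1, hx'p⟩, hq.1.2.2⟩, hq.2.1, hq.2.2⟩⟩

/-- if no neighbour of `p` is coloured `a` or `b`, chains (from `z ≠ p`) avoid `p`. -/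
lemma kchain_avoid' (hz : z ≠ p)
    (hnb : ∀ t, (restr Γ B).Adj p t → ¬(c t = a ∨ c t = b))
    (h : KChain (restr Γ B) c a b z x) :
    x ≠ p ∧ KChain (restr Γ (B \ {p})) c a b z x := by
  induction h with
  | refl => exact ⟨hz, Relation.ReflTransGen.refl⟩
  | tail _ hq ih =>
      rename_i q x' hqx
      have hx'p : x' ≠ p := by
        rintro rfl
        exact hnb q hq.1.symm hq.2.1
      exact ⟨hx'p, ih.2.tail ⟨⟨⟨hq.1.1, ih.1⟩, ⟨hq.1.2.1, hx'p⟩, hq.1.2.2⟩, hq.2.1, hq.2.2⟩⟩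

/-- dragging: if `p` has a unique `{a,b}`-coloured neighbour `y₀`, then chains in `B`
reach outside of `{p}` exactly as chains in `B \ {p}` do. -/
lemma kchain_drag (hz : z ≠ p) {y₀ : V}
    (huniq : ∀ t, (restr Γ B).Adj p t → (c t = a ∨ c t = b) → t = y₀)
    (h : KChain (restr Γ B) c a b z x) :
    (x ≠ p → KChain (restr Γ (B \ {p})) c a b z x) ∧
      (x = p → KChain (restr Γ (B \ {p})) c a b z y₀) := by
  induction h with
  | refl => exact ⟨fun _ => Relation.ReflTransGen.refl, fun h => absurd h hz⟩
  | tail hzq hq ih =>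
      rename_i q x'
      constructor
      · intro hx'p
        by_cases hqp : q = p
        · subst hqp
          have hx'y : x' = y₀ := huniq x' hq.1 hq.2.2
          rw [hx'y]
          exact ih.2 rfl
        · exact (ih.1 hqp).tail
            ⟨⟨⟨hq.1.1, hqp⟩, ⟨hq.1.2.1, hx'p⟩, hq.1.2.2⟩, hq.2.1, hq.2.2⟩
      · intro hx'p
        have hadj : (restr Γ B).Adj p q := hx'p ▸ hq.1.symm
        have hqp : q ≠ p := fun h => (restr Γ B).loopless.irrefl p (h ▸ hadj)
        have hqy : q = y₀ := huniq q hadj hq.2.1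
        rw [← hqy]
        exact ih.1 hqp

/-- chains only depend on the colours of vertices of `B`. -/
lemma kchain_congr_on {S : Set V} (hcc : ∀ t ∈ S, c t = c' t) :
    KChain (restr Γ S) c a b z x ↔ KChain (restr Γ S) c' a b z x := by
  constructor <;> intro h
  · induction h with
    | refl => exact Relation.ReflTransGen.refl
    | tail _ hq ih =>
        exact ih.tail ⟨hq.1, hcc _ hq.1.1 ▸ hq.2.1, hcc _ hq.1.2.1 ▸ hq.2.2⟩
  · induction h with
    | refl => exact Relation.ReflTransGen.refl
    | tail _ hq ih =>
        exact ih.tail ⟨hq.1, (hcc _ hq.1.1).symm ▸ hq.2.1, (hcc _ hq.1.2.1).symm ▸ hq.2.2⟩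

lemma restr_mono_subset {S T : Set V} (hST : S ⊆ T) ⦃s t : V⦄
    (h : (restr Γ S).Adj s t) : (restr Γ T).Adj s t :=
  ⟨hST h.1, hST h.2.1, h.2.2⟩

/-- lifting a single Kempe change from `B \ {p}` to `B`, when chains from `z` avoid `p`. -/
lemma lift_step_avoid {e f m : V → Fin k} (hab : a ≠ b) (hzB : z ∈ B) (hzp : z ≠ p)
    (hfz : f z = a ∨ f z = b)
    (hm : ∀ t, m t = if KChain (restr Γ (B \ {p})) f a b z t then kswap a b (f t) else f t)
    (hef : ∀ t, t ≠ p → e t = f t)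
    (hav : ∀ t, t ≠ p →
      (KChain (restr Γ B) e a b z t ↔ KChain (restr Γ (B \ {p})) e a b z t)) :
    ∃ e₁, StepOn Γ B e e₁ ∧ ∀ t, t ≠ p → e₁ t = m t := by
  have hez : e z = a ∨ e z = b := by rw [hef z hzp]; exact hfz
  refine ⟨_, stepOn_swap hab hzB hez, fun t htp => ?_⟩
  have hiff : KChain (restr Γ B) e a b z t ↔ KChain (restr Γ (B \ {p})) f a b z t := by
    rw [show (KChain (restr Γ (B \ {p})) f a b z t ↔ KChain (restr Γ (B \ {p})) e a b z t)
      from (kchain_congr_on (fun s hs => (hef s hs.2).symm))]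
    exact hav t htp
  rw [hm t]
  by_cases hch : KChain (restr Γ B) e a b z t
  · rw [if_pos hch, if_pos (hiff.1 hch), hef t htp]
  · rw [if_neg hch, if_neg (fun h => hch (hiff.2 h)), hef t htp]

variable [Fintype V]

/-- lifting a sequence of Kempe changes from `B \ {p}` to `B`. -/
lemma lift_seq (hpB : p ∈ B)
    (hfree : ∀ (e : V → Fin k) (a b : Fin k), ProperCol (restr Γ B) e →
      (e p = a ∨ e p = b) →
      (∃ y₀ y₁, y₀ ≠ y₁ ∧ ((restr Γ B).Adj p y₀ ∧ (e y₀ = a ∨ e y₀ = b)) ∧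
        ((restr Γ B).Adj p y₁ ∧ (e y₁ = a ∨ e y₁ = b))) →
      ∃ d, ¬(d = a ∨ d = b) ∧ ∀ t, (restr Γ B).Adj p t → e t ≠ d) :
    ∀ {f f' : V → Fin k}, Relation.ReflTransGen (StepOn Γ (B \ {p})) f f' →
    ∀ e, ProperCol (restr Γ B) e → (∀ t, t ≠ p → e t = f t) →
    ∃ e', Relation.ReflTransGen (StepOn Γ B) e e' ∧ ProperCol (restr Γ B) e' ∧
      ∀ t, t ≠ p → e' t = f' t := by
  intro f f' hseq
  induction hseq using Relation.ReflTransGen.head_induction_on with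
  | refl => exact fun e hprop hef => ⟨e, Relation.ReflTransGen.refl, hprop, hef⟩
  | head S tl IH =>
      rename_i f m
      intro e hprop hef
      obtain ⟨a, b, z, hab, hzB', hfz, hm⟩ := S
      have hzp : z ≠ p := hzB'.2
      have hzB : z ∈ B := hzB'.1
      -- helper applying a single-step lift then recursing
      have done : ∀ e₀ : V → Fin k, ProperCol (restr Γ B) e₀ → (∀ t, t ≠ p → e₀ t = f t) →
          (∀ t, t ≠ p →
            (KChain (restr Γ B) e₀ a b z t ↔ KChain (restr Γ (B \ {p})) e₀ a b z t)) →
          Relation.ReflTransGen (StepOn Γ B) e e₀ →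
          ∃ e', Relation.ReflTransGen (StepOn Γ B) e e' ∧ ProperCol (restr Γ B) e' ∧
            ∀ t, t ≠ p → e' t = f' t := by
        intro e₀ hprop₀ hef₀ hav₀ hsteps
        obtain ⟨e₁, hstep₁, he₁⟩ := lift_step_avoid hab hzB hzp hfz hm hef₀ hav₀
        obtain ⟨e', hseq', hprop', he'⟩ := IH e₁ (proper_stepOn hprop₀ hstep₁) he₁
        exact ⟨e', (hsteps.tail hstep₁).trans hseq', hprop', he'⟩
      by_cases hpc : e p = a ∨ e p = b
      · by_cases hex : ∃ y, (restr Γ B).Adj p y ∧ (e y = a ∨ e y = b)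
        · obtain ⟨y₀, hy₀⟩ := hex
          by_cases huniq : ∀ t, (restr Γ B).Adj p t → (e t = a ∨ e t = b) → t = y₀
          · -- drag case : single step, chain may include p but agrees off p
            exact done e hprop hef
              (fun t htp => ⟨fun h => (kchain_drag hzp huniq h).1 htp,
                fun h => kchain_mono (restr_mono_subset Set.diff_subset) h⟩)
              Relation.ReflTransGen.refl
          · -- park then lift
            push_neg at huniq
            obtain ⟨y₁, hy₁adj, hy₁c, hy₁ne⟩ := huniq
            obtain ⟨d, hdab, hdnb⟩ := hfree e a b hprop hpc
              ⟨y₁, y₀, hy₁ne, ⟨hy₁adj, hy₁c⟩, hy₀⟩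
            have hdp : d ≠ e p := by
              rintro rfl; exact hdab hpc
            have hpark : StepOn Γ B e (Function.update e p d) :=
              stepOn_update hpB hdp (fun t ht => ⟨hprop ht.symm, hdnb t ht⟩)
            have hup : ∀ t, t ≠ p → Function.update e p d t = f t := by
              intro t htp; rw [Function.update_of_ne htp]; exact hef t htp
            have hpd : ¬(Function.update e p d p = a ∨ Function.update e p d p = b) := by
              rw [Function.update_self]; exact hdab
            exact done (Function.update e p d) (proper_stepOn hprop hpark) hup
              (fun t htp => ⟨fun h => (kchain_avoid hzp hpd h).2,
                fun h => kchain_mono (restr_mono_subset Set.diff_subset) h⟩)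
              (Relation.ReflTransGen.refl.tail hpark)
        · -- no coloured neighbour of p : chains avoid p
          push_neg at hex
          exact done e hprop hef
            (fun t htp => ⟨fun h => (kchain_avoid' hzp (fun s hs => by
              have := hex s hs; tauto) h).2,
              fun h => kchain_mono (restr_mono_subset Set.diff_subset) h⟩)
            Relation.ReflTransGen.refl
      · exact done e hprop hef
          (fun t htp => ⟨fun h => (kchain_avoid hzp hpc h).2,
            fun h => kchain_mono (restr_mono_subset Set.diff_subset) h⟩)
          Relation.ReflTransGen.refl

/-- counting: the free-colour hypothesis follows from a degree bound `≤ k - 1`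
when two coloured neighbours share a colour. -/
lemma free_colour {B : Finset V} (hpB : p ∈ B)
    (hdeg : (B.filter (fun t => Γ.Adj p t)).card ≤ k - 1)
    (e : V → Fin k) (a b : Fin k) (hprop : ProperCol (restr Γ ↑B) e)
    (hpc : e p = a ∨ e p = b)
    (htwo : ∃ y₀ y₁, y₀ ≠ y₁ ∧ ((restr Γ (↑B : Set V)).Adj p y₀ ∧ (e y₀ = a ∨ e y₀ = b)) ∧
      ((restr Γ (↑B : Set V)).Adj p y₁ ∧ (e y₁ = a ∨ e y₁ = b))) :
    ∃ d, ¬(d = a ∨ d = b) ∧ ∀ t, (restr Γ (↑B : Set V)).Adj p t → e t ≠ d := by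
  obtain ⟨y₀, y₁, hne, ⟨hadj₀, hc₀⟩, ⟨hadj₁, hc₁⟩⟩ := htwo
  set N : Finset V := B.filter (fun t => Γ.Adj p t) with hN
  have hmemN : ∀ t, (restr Γ (↑B : Set V)).Adj p t ↔ t ∈ N := by
    intro t
    simp only [hN, Finset.mem_filter, restr_adj]
    exact ⟨fun h => ⟨h.2.1, h.2.2⟩, fun h => ⟨hpB, h.1, h.2⟩⟩
  have hy₀N : y₀ ∈ N := (hmemN y₀).1 hadj₀
  have hy₁N : y₁ ∈ N := (hmemN y₁).1 hadj₁
  -- both coloured neighbours receive the colour of `{a,b}` other than `e p`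
  have heq : e y₀ = e y₁ := by
    have h₀ : e y₀ ≠ e p := fun h => hprop hadj₀ h.symm
    have h₁ : e y₁ ≠ e p := fun h => hprop hadj₁ h.symm
    rcases hpc with hp | hp <;> rcases hc₀ with h | h <;> rcases hc₁ with h' | h' <;>
      simp_all
  set C : Finset (Fin k) := N.image e with hC
  have hCsub : C ⊆ (N.erase y₁).image e := by
    intro x hx
    obtain ⟨t, htN, rfl⟩ := Finset.mem_image.1 hx
    by_cases ht : t = y₁
    · subst ht
      exact Finset.mem_image.2 ⟨y₀, Finset.mem_erase.2 ⟨hne, hy₀N⟩, heq⟩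
    · exact Finset.mem_image.2 ⟨t, Finset.mem_erase.2 ⟨ht, htN⟩, rfl⟩
  have hCcard : C.card ≤ N.card - 1 := by
    calc C.card ≤ ((N.erase y₁).image e).card := Finset.card_le_card hCsub
    _ ≤ (N.erase y₁).card := Finset.card_image_le
    _ = N.card - 1 := Finset.card_erase_of_mem hy₁N
  have hF : (insert (e p) C).card < k := by
    have h1 : (insert (e p) C).card ≤ C.card + 1 := Finset.card_insert_le _ _
    have hNpos : 1 ≤ N.card := Finset.card_pos.2 ⟨y₀, hy₀N⟩
    have h2 : C.card + 1 ≤ N.card := by omega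
    have h3 : N.card ≤ k - 1 := hdeg
    have hk : 1 ≤ k := (e p).pos
    omega
  obtain ⟨d, hd⟩ : ∃ d : Fin k, d ∉ insert (e p) C := by
    by_contra h
    push_neg at h
    have : (Finset.univ : Finset (Fin k)).card ≤ (insert (e p) C).card :=
      Finset.card_le_card (fun t _ => h t)
    simp [Fintype.card_fin] at this
    omega
  have hdC : d ∉ C := fun h => hd (Finset.mem_insert_of_mem h)
  have hdp : d ≠ e p := fun h => hd (h ▸ Finset.mem_insert_self _ _)
  refine ⟨d, ?_, fun t ht h => hdC (Finset.mem_image.2 ⟨t, (hmemN t).1 ht, h⟩)⟩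
  -- `d` is not `a` nor `b`
  have hother : e y₀ ∈ C := Finset.mem_image.2 ⟨y₀, hy₀N, rfl⟩
  rintro (rfl | rfl)
  · rcases hpc with hp | hp
    · exact hdp hp.symm
    · rcases hc₀ with h | h
      · exact hdC (h ▸ hother)
      · have h₀ : e y₀ ≠ e p := fun hh => hprop hadj₀ hh.symm
        simp_all
  · rcases hpc with hp | hp
    · rcases hc₀ with h | h
      · have h₀ : e y₀ ≠ e p := fun hh => hprop hadj₀ hh.symm
        simp_all
      · exact hdC (h ▸ hother)
    · exact hdp hp.symm

/-- Las Vergnas–Meyniel style induction: if every nonempty subset has a vertex of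
small degree, then proper colourings agreeing outside `B` are connected by Kempe
changes inside `B`. -/
theorem lvm (Γ : SimpleGraph V) {k : ℕ}
    (helim : ∀ B : Finset V, B.Nonempty →
      ∃ p ∈ B, (B.filter (fun t => Γ.Adj p t)).card ≤ k - 1) :
    ∀ B : Finset V, ∀ c c' : V → Fin k, ProperCol (restr Γ ↑B) c →
      ProperCol (restr Γ ↑B) c' → (∀ x, x ∉ B → c x = c' x) →
      Relation.ReflTransGen (StepOn Γ (↑B : Set V)) c c' := by
  intro B
  induction B using Finset.strongInduction with
  | _ B IH =>
    intro c c' hc hc' hcc'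
    rcases B.eq_empty_or_nonempty with rfl | hne
    · have : c = c' := funext (fun x => hcc' x (by simp))
      rw [this]
    · obtain ⟨p, hpB, hdeg⟩ := helim B hne
      have hB'lt : B.erase p ⊂ B := Finset.erase_ssubset hpB
      set c₂ := Function.update c' p (c p) with hc₂def
      have hc₂ : ProperCol (restr Γ ↑(B.erase p)) c₂ := by
        intro x y hxy
        have hx : x ≠ p := by
          have := hxy.1; rw [Finset.coe_erase] at this; exact this.2
        have hy : y ≠ p := by
          have := hxy.2.1; rw [Finset.coe_erase] at this; exact this.2
        rw [hc₂def, Function.update_of_ne hx, Function.update_of_ne hy]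
        exact hc' (restr_mono_subset (by rw [Finset.coe_erase]; exact Set.diff_subset) hxy)
      have hcB' : ProperCol (restr Γ ↑(B.erase p)) c :=
        properCol_mono (restr_mono_subset
          (by rw [Finset.coe_erase]; exact Set.diff_subset)) hc
      have hagree : ∀ x, x ∉ B.erase p → c x = c₂ x := by
        intro x hx
        by_cases hxp : x = p
        · subst hxp; rw [hc₂def, Function.update_self]
        · have hxB : x ∉ B := fun h => hx (Finset.mem_erase.2 ⟨hxp, h⟩)
          rw [hc₂def, Function.update_of_ne hxp]
          exact hcc' x hxB
      have seq := IH (B.erase p) hB'lt c c₂ hcB' hc₂ hagree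
      rw [show ((↑(B.erase p) : Set V) = ↑B \ {p}) from Finset.coe_erase p B] at seq
      have hfree := fun (e : V → Fin k) (a b : Fin k) hprop hpc htwo =>
        free_colour hpB hdeg e a b hprop hpc htwo
      obtain ⟨e', hsteps, hprop', hoff⟩ := lift_seq hpB hfree seq c hc (fun t _ => rfl)
      -- now `e'` agrees with `c'` except possibly at `p`; fix `p`
      have he'c' : ∀ t, t ≠ p → e' t = c' t := by
        intro t htp
        rw [hoff t htp, hc₂def, Function.update_of_ne htp]
      by_cases hp : e' p = c' p
      · have : e' = c' := funext (fun t => by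
          by_cases htp : t = p
          · rw [htp]; exact hp
          · exact he'c' t htp)
        rw [← this]; exact hsteps
      · have hstep : StepOn Γ ↑B e' (Function.update e' p (c' p)) := by
          refine stepOn_update hpB (fun h => hp h.symm) (fun t ht => ⟨?_, ?_⟩)
          · exact fun h => hprop' ht.symm h
          · have htp : t ≠ p := fun h => (restr Γ ↑B).loopless.irrefl p (h ▸ ht)
            rw [he'c' t htp]
            exact fun h => hc' ht.symm h
        have : Function.update e' p (c' p) = c' := funext (fun t => by
          by_cases htp : t = p
          · rw [htp, Function.update_self]
          · rw [Function.update_of_ne htp]; exact he'c' t htp)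
        rw [← this]
        exact hsteps.tail hstep

end Lift

section SwapList

variable {G : SimpleGraph V} {a b : Fin k}

lemma kempeStep_of_swap {g : V → Fin k} {z : V} (hab : a ≠ b) (hz : g z = a ∨ g z = b) :
    KempeStep G g (fun t => if KChain G g a b z t then kswap a b (g t) else g t) :=
  ⟨a, b, z, hab, hz, rfl⟩

lemma mem_swap_iff {g : V → Fin k} {z : V} {t : V} :
    (g t = a ∨ g t = b) ↔
      ((fun t => if KChain G g a b z t then kswap a b (g t) else g t) t = a ∨
       (fun t => if KChain G g a b z t then kswap a b (g t) else g t) t = b) := by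
  by_cases hch : KChain G g a b z t
  · simp only [if_pos hch]
    exact ⟨fun h => kswap_mem h, fun h => by
      by_contra hc
      exact kswap_not_mem hc h⟩
  · simp only [if_neg hch]

/-- swapping the chains of a list of pairwise unconnected base points. -/
lemma swap_list (hab : a ≠ b) :
    ∀ (L : List V) (g : V → Fin k), (∀ s ∈ L, g s = a ∨ g s = b) →
    L.Pairwise (fun s t => ¬ KChain G g a b s t) →
    Relation.ReflTransGen (KempeStep G) g
      (fun t => if ∃ s ∈ L, KChain G g a b s t then kswap a b (g t) else g t) := by
  intro L
  induction L with
  | nil =>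
      intro g _ _
      have : (fun t => if ∃ s ∈ ([] : List V), KChain G g a b s t
          then kswap a b (g t) else g t) = g := by
        funext t; simp
      rw [this]
  | cons z L' IHL =>
      intro g hcol hpw
      set g₁ := fun t => if KChain G g a b z t then kswap a b (g t) else g t with hg₁
      have hstep : KempeStep G g g₁ := kempeStep_of_swap hab (hcol z (by simp))
      have hch : ∀ s t, KChain G g₁ a b s t ↔ KChain G g a b s t := by
        intro s t
        exact (kchain_congr_mem (fun r => mem_swap_iff)).symm
      have hpw' := (List.pairwise_cons.1 hpw)
      have hcol' : ∀ s ∈ L', g₁ s = a ∨ g₁ s = b := by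
        intro s hs
        have : ¬ KChain G g a b z s := hpw'.1 s hs
        simp only [hg₁, if_neg this]
        exact hcol s (by simp [hs])
      have hpw₁ : L'.Pairwise (fun s t => ¬ KChain G g₁ a b s t) := by
        refine hpw'.2.imp ?_
        intro s t h hc
        exact h ((hch s t).1 hc)
      have tailseq := IHL g₁ hcol' hpw₁
      refine (Relation.ReflTransGen.refl.tail hstep).trans (tailseq.trans ?_)
      have : (fun t => if ∃ s ∈ L', KChain G g₁ a b s t then kswap a b (g₁ t) else g₁ t)
          = (fun t => if ∃ s ∈ (z :: L'), KChain G g a b s t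
              then kswap a b (g t) else g t) := by
        funext t
        have hQ : (∃ s ∈ L', KChain G g₁ a b s t) ↔ (∃ s ∈ L', KChain G g a b s t) := by
          constructor
          · rintro ⟨s, hs, hkc⟩; exact ⟨s, hs, (hch s t).1 hkc⟩
          · rintro ⟨s, hs, hkc⟩; exact ⟨s, hs, (hch s t).2 hkc⟩
        by_cases hz : KChain G g a b z t
        · have hnQ : ¬ (∃ s ∈ L', KChain G g a b s t) := by
            rintro ⟨s, hs, hkc⟩
            exact hpw'.1 s hs (kchain_trans hz (kchain_symm hkc))
          rw [if_neg (fun h => hnQ (hQ.1 h)),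
            if_pos (⟨z, by simp, hz⟩ : ∃ s ∈ (z :: L'), KChain G g a b s t)]
          simp only [hg₁, if_pos hz]
        · have hcond : (∃ s ∈ (z :: L'), KChain G g a b s t) ↔
              (∃ s ∈ L', KChain G g a b s t) := by
            simp only [List.mem_cons]
            constructor
            · rintro ⟨s, (rfl | hs), hkc⟩
              · exact absurd hkc hz
              · exact ⟨s, hs, hkc⟩
            · rintro ⟨s, hs, hkc⟩; exact ⟨s, Or.inr hs, hkc⟩
          have hg₁t : g₁ t = g t := by simp only [hg₁, if_neg hz]
          by_cases hQ' : ∃ s ∈ L', KChain G g a b s t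
          · rw [if_pos (hQ.2 hQ'), if_pos (hcond.2 hQ'), hg₁t]
          · rw [if_neg (fun h => hQ' (hQ.1 h)), if_neg (fun h => hQ' (hcond.1 h)), hg₁t]
      rw [this]

end SwapList

section Merge

/-- the graph obtained from `G` by identifying `v` with `u` (leaving `v` isolated). -/
def mergeGraph (G : SimpleGraph V) (u v : V) : SimpleGraph V where
  Adj x y := x ≠ v ∧ y ≠ v ∧ x ≠ y ∧
    (G.Adj x y ∨ (x = u ∧ G.Adj v y) ∨ (y = u ∧ G.Adj x v))
  symm := by
    constructor
    intro x y ⟨h1, h2, h3, h4⟩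
    refine ⟨h2, h1, h3.symm, ?_⟩
    rcases h4 with h | h | h
    · exact Or.inl h.symm
    · exact Or.inr (Or.inr ⟨h.1, h.2.symm⟩)
    · exact Or.inr (Or.inl ⟨h.1, h.2.symm⟩)
  loopless := ⟨fun x h => h.2.2.1 rfl⟩

/-- the merging map: sends `v` to `u`. -/
noncomputable def mergeMap (u v : V) : V → V := fun x => if x = v then u else x

variable {G : SimpleGraph V} {u v : V}
variable {a b : Fin k} {h h' : V → Fin k} {z x t : V}

lemma mergeMap_ne (huv : u ≠ v) (x : V) : mergeMap u v x ≠ v := by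
  unfold mergeMap; split_ifs with hx
  · exact huv
  · exact hx

lemma mergeMap_eq (hx : x ≠ v) : mergeMap u v x = x := if_neg hx

lemma mergeMap_v : mergeMap u v v = u := if_pos rfl

lemma merge_no_adj_v (t : V) : ¬ (mergeGraph G u v).Adj v t := fun h => h.1 rfl

/-- projection of chains of `G` onto chains of the merged graph. -/
lemma kchain_proj (huv : u ≠ v) (hnadj : ¬ G.Adj u v)
    (hk : KChain G (h ∘ mergeMap u v) a b z x) :
    KChain (mergeGraph G u v) h a b (mergeMap u v z) (mergeMap u v x) := by
  induction hk with
  | refl => exact Relation.ReflTransGen.refl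
  | tail hzq hq ih =>
      rename_i q x'
      refine ih.tail ⟨?_, hq.2.1, hq.2.2⟩
      have hadj := hq.1
      have hqx : q ≠ x' := G.ne_of_adj hadj
      refine ⟨mergeMap_ne huv q, mergeMap_ne huv x', ?_, ?_⟩
      · -- images distinct
        intro him
        unfold mergeMap at him
        split_ifs at him with h1 h2 h2
        · exact hqx (h1.trans h2.symm)
        · subst h1; subst him; exact hnadj (hadj.symm)
        · subst h2; subst him; exact hnadj hadj
        · exact hqx him
      · -- adjacency in the merged graph
        by_cases hqv : q = v
        · have hx'v : x' ≠ v := fun h => hqx (hqv.trans h.symm)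
          rw [hqv, mergeMap_v, mergeMap_eq hx'v]
          exact Or.inr (Or.inl ⟨rfl, hqv ▸ hadj⟩)
        · by_cases hx'v : x' = v
          · subst hx'v
            rw [mergeMap_v, mergeMap_eq hqv]
            exact Or.inr (Or.inr ⟨rfl, hadj⟩)
          · rw [mergeMap_eq hqv, mergeMap_eq hx'v]
            exact Or.inl hadj

/-- chains of the merged graph from `z ≠ v` stay away from `v`. -/
lemma kchain_merge_ne_v (hz : z ≠ v) (hk : KChain (mergeGraph G u v) h a b z x) :
    x ≠ v := by
  induction hk with
  | refl => exact hz
  | tail _ hq _ => exact hq.1.2.1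

/-- lifting chains of the merged graph to chains of `G`. -/
lemma kchain_merge_lift (huv : u ≠ v) (hz : z ≠ v)
    (hk : KChain (mergeGraph G u v) h a b z x) :
    KChain G (h ∘ mergeMap u v) a b z x ∨ KChain G (h ∘ mergeMap u v) a b u x ∨
      KChain G (h ∘ mergeMap u v) a b v x := by
  induction hk with
  | refl => exact Or.inl Relation.ReflTransGen.refl
  | tail hzq hq ih =>
      rename_i q x'
      have hqv : q ≠ v := kchain_merge_ne_v hz hzq
      have hx'v : x' ≠ v := hq.1.2.1
      have hgq : (h ∘ mergeMap u v) q = a ∨ (h ∘ mergeMap u v) q = b := by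
        simp only [Function.comp_apply, mergeMap_eq hqv]; exact hq.2.1
      have hgx' : (h ∘ mergeMap u v) x' = a ∨ (h ∘ mergeMap u v) x' = b := by
        simp only [Function.comp_apply, mergeMap_eq hx'v]; exact hq.2.2
      rcases hq.1.2.2.2 with hadj | ⟨hqu, hadj⟩ | ⟨hx'u, hadj⟩
      · rcases ih with ih | ih | ih
        · exact Or.inl (ih.tail ⟨hadj, hgq, hgx'⟩)
        · exact Or.inr (Or.inl (ih.tail ⟨hadj, hgq, hgx'⟩))
        · exact Or.inr (Or.inr (ih.tail ⟨hadj, hgq, hgx'⟩))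
      · -- q = u, G.Adj v x' : reach x' from v
        have hgv : (h ∘ mergeMap u v) v = a ∨ (h ∘ mergeMap u v) v = b := by
          have hvu : (h ∘ mergeMap u v) v = (h ∘ mergeMap u v) u := by
            simp only [Function.comp_apply, mergeMap_v, mergeMap_eq huv]
          rw [hvu]; rw [hqu] at hgq; exact hgq
        exact Or.inr (Or.inr (Relation.ReflTransGen.refl.tail ⟨hadj, hgv, hgx'⟩))
      · exact Or.inr (Or.inl (hx'u ▸ Relation.ReflTransGen.refl))

/-- simulating one Kempe change of the merged graph by Kempe changes of `G`. -/
lemma simulate (huv : u ≠ v) (hnadj : ¬ G.Adj u v) {h h' : V → Fin k}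
    (hstep : KempeStep (mergeGraph G u v) h h') :
    Relation.ReflTransGen (KempeStep G) (h ∘ mergeMap u v) (h' ∘ mergeMap u v) := by
  obtain ⟨a, b, z, hab, hz, rfl⟩ := hstep
  by_cases hzv : z = v
  · -- the chain of `v` is trivial and does not affect the projected colouring
    have heq : (fun x => if KChain (mergeGraph G u v) h a b z x
        then kswap a b (h x) else h x) ∘ mergeMap u v = h ∘ mergeMap u v := by
      funext t
      simp only [Function.comp_apply]
      rw [if_neg]
      intro hch
      have : mergeMap u v t = z :=
        kchain_trivial (fun s hs _ => (by rw [hzv] at hs; exact hs.1 rfl)) hch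
      exact mergeMap_ne huv t (this.trans hzv)
    rw [heq]
  · -- `z ≠ v`
    have hgz : (h ∘ mergeMap u v) z = a ∨ (h ∘ mergeMap u v) z = b := by
      simp only [Function.comp_apply, mergeMap_eq hzv]; exact hz
    have hgt : ∀ t, t ≠ v → (h ∘ mergeMap u v) t = h t := by
      intro t htv; simp only [Function.comp_apply, mergeMap_eq htv]
    have hgv : (h ∘ mergeMap u v) v = h u := by
      simp only [Function.comp_apply, mergeMap_v]
    set g := h ∘ mergeMap u v with hgdef
    -- projections
    have hproj : ∀ s t : V, s ≠ v → t ≠ v → KChain G g a b s t →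
        KChain (mergeGraph G u v) h a b s t := by
      intro s t hsv htv hch
      have := kchain_proj huv hnadj (h := h) hch
      rwa [mergeMap_eq hsv, mergeMap_eq htv] at this
    have hprojv : ∀ t : V, t ≠ v → KChain G g a b v t →
        KChain (mergeGraph G u v) h a b u t := by
      intro t htv hch
      have := kchain_proj huv hnadj (h := h) hch
      rwa [mergeMap_v, mergeMap_eq htv] at this
    have hprojv' : ∀ s : V, s ≠ v → KChain G g a b s v →
        KChain (mergeGraph G u v) h a b s u := by
      intro s hsv hch
      have := kchain_proj huv hnadj (h := h) hch
      rwa [mergeMap_v, mergeMap_eq hsv] at this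
    by_cases huD : KChain (mergeGraph G u v) h a b z u
    · -- the merged vertex lies in the chain
      have hhu : h u = a ∨ h u = b := kchain_colour_mem huD hz
      have hgu : g u = a ∨ g u = b := by rw [hgt u (huv : u ≠ v)]; exact hhu
      have hgvc : g v = a ∨ g v = b := by rw [hgv]; exact hhu
      -- a list of base points covering the three relevant chains
      obtain ⟨L, hcol, hpw, hiffL⟩ : ∃ L : List V,
          (∀ s ∈ L, g s = a ∨ g s = b) ∧
          L.Pairwise (fun s t => ¬ KChain G g a b s t) ∧
          (∀ t, (∃ s ∈ L, KChain G g a b s t) ↔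
            (KChain G g a b z t ∨ KChain G g a b u t ∨ KChain G g a b v t)) := by
        by_cases hcu : KChain G g a b z u
        · by_cases hcv : KChain G g a b z v
          · refine ⟨[z], by simp [hgz], by simp, fun t => ?_⟩
            simp only [List.mem_singleton, exists_eq_left]
            constructor
            · exact fun hh => Or.inl hh
            · rintro (hh | hh | hh)
              · exact hh
              · exact kchain_trans hcu hh
              · exact kchain_trans hcv hh
          · refine ⟨[z, v], by simp [hgz, hgvc], by simp [hcv], fun t => ?_⟩
            constructor
            · rintro ⟨s, hs, hch⟩
              simp only [List.mem_cons, List.mem_singleton] at hs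
              rcases hs with rfl | rfl | hs
              · exact Or.inl hch
              · exact Or.inr (Or.inr hch)
              · exact absurd hs List.not_mem_nil
            · rintro (hh | hh | hh)
              · exact ⟨z, by simp, hh⟩
              · exact ⟨z, by simp, kchain_trans hcu hh⟩
              · exact ⟨v, by simp, hh⟩
        · by_cases hcv : KChain G g a b z v ∨ KChain G g a b u v
          · refine ⟨[z, u], by simp [hgz, hgu], by simp [hcu], fun t => ?_⟩
            constructor
            · rintro ⟨s, hs, hch⟩
              simp only [List.mem_cons, List.mem_singleton] at hs
              rcases hs with rfl | rfl | hs
              · exact Or.inl hch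
              · exact Or.inr (Or.inl hch)
              · exact absurd hs List.not_mem_nil
            · rintro (hh | hh | hh)
              · exact ⟨z, by simp, hh⟩
              · exact ⟨u, by simp, hh⟩
              · rcases hcv with hcv | hcv
                · exact ⟨z, by simp, kchain_trans hcv hh⟩
                · exact ⟨u, by simp, kchain_trans hcv hh⟩
          · push_neg at hcv
            refine ⟨[z, u, v], by simp [hgz, hgu, hgvc],
              by simp [hcu, hcv.1, hcv.2], fun t => ?_⟩
            constructor
            · rintro ⟨s, hs, hch⟩
              simp only [List.mem_cons, List.mem_singleton] at hs
              rcases hs with rfl | rfl | rfl | hs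
              · exact Or.inl hch
              · exact Or.inr (Or.inl hch)
              · exact Or.inr (Or.inr hch)
              · exact absurd hs List.not_mem_nil
            · rintro (hh | hh | hh)
              · exact ⟨z, by simp, hh⟩
              · exact ⟨u, by simp, hh⟩
              · exact ⟨v, by simp, hh⟩
      have hseq := swap_list (G := G) hab L g hcol hpw
      have hfinal : (fun t => if ∃ s ∈ L, KChain G g a b s t
          then kswap a b (g t) else g t) =
          (fun x => if KChain (mergeGraph G u v) h a b z x
            then kswap a b (h x) else h x) ∘ mergeMap u v := by
        funext t
        simp only [Function.comp_apply]
        by_cases htv : t = v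
        · -- at `v`
          have hTv : ∃ s ∈ L, KChain G g a b s v := (hiffL v).2
            (Or.inr (Or.inr Relation.ReflTransGen.refl))
          rw [htv, mergeMap_v, if_pos ((hiffL v).2 (Or.inr (Or.inr
            Relation.ReflTransGen.refl))), if_pos huD, hgv]
        · rw [mergeMap_eq htv]
          have hiff2 : (∃ s ∈ L, KChain G g a b s t) ↔
              KChain (mergeGraph G u v) h a b z t := by
            rw [hiffL t]
            constructor
            · rintro (hh | hh | hh)
              · exact hproj z t hzv htv hh
              · exact kchain_trans huD (hproj u t (huv : u ≠ v) htv hh)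
              · exact kchain_trans huD (hprojv t htv hh)
            · intro hh
              exact kchain_merge_lift huv hzv hh
          by_cases hch : ∃ s ∈ L, KChain G g a b s t
          · rw [if_pos hch, if_pos (hiff2.1 hch), hgt t htv]
          · rw [if_neg hch, if_neg (fun hh => hch (hiff2.2 hh)), hgt t htv]
      rw [← hfinal]
      exact hseq
    · -- the merged vertex is not in the chain : single swap
      have hseq := swap_list (G := G) hab [z] g (by simp [hgz]) (by simp)
      have hfinal : (fun t => if ∃ s ∈ [z], KChain G g a b s t
          then kswap a b (g t) else g t) =
          (fun x => if KChain (mergeGraph G u v) h a b z x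
            then kswap a b (h x) else h x) ∘ mergeMap u v := by
        funext t
        simp only [Function.comp_apply, List.mem_singleton, exists_eq_left]
        by_cases htv : t = v
        · -- `v` is in no chain
          have hnv : ¬ KChain G g a b z v := fun hh => huD (hprojv' z hzv hh)
          rw [htv, mergeMap_v, if_neg hnv, if_neg huD, hgv]
        · rw [mergeMap_eq htv]
          have hiff2 : KChain G g a b z t ↔ KChain (mergeGraph G u v) h a b z t := by
            constructor
            · exact fun hh => hproj z t hzv htv hh
            · intro hh
              rcases kchain_merge_lift huv hzv hh with h1 | h1 | h1
              · exact h1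
              · exact absurd (kchain_trans hh (kchain_symm
                  (hproj u t (huv : u ≠ v) htv h1))) huD
              · exact absurd (kchain_trans hh (kchain_symm (hprojv t htv h1))) huD
          by_cases hch : KChain G g a b z t
          · rw [if_pos hch, if_pos (hiff2.1 hch), hgt t htv]
          · rw [if_neg hch, if_neg (fun hh => hch (hiff2.2 hh)), hgt t htv]
      rw [← hfinal]
      exact hseq

end Merge

section Crossing

lemma walk_crossing {W : Type*} {Γ : SimpleGraph W} {A : Set W} :
    ∀ {s t : W} (_ : Γ.Walk s t), s ∈ A → t ∉ A →
      ∃ x y, x ∈ A ∧ y ∉ A ∧ Γ.Adj x y := by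
  intro s t w
  induction w with
  | nil => intro h1 h2; exact absurd h1 h2
  | cons hadj p ih =>
      rename_i s' m t'
      intro h1 h2
      by_cases hm : m ∈ A
      · exact ih hm h2
      · exact ⟨s', m, h1, hm, hadj⟩

lemma exists_crossing {G : SimpleGraph V} {S : Set V}
    (hconn : (G.induce Sᶜ).Connected) {A : Set V}
    {x₀ y₀ : V} (hx : x₀ ∈ Sᶜ) (hy : y₀ ∈ Sᶜ) (hxA : x₀ ∈ A) (hyA : y₀ ∉ A) :
    ∃ x y : V, x ∈ A ∧ y ∉ A ∧ y ∈ Sᶜ ∧ G.Adj x y := by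
  obtain ⟨wk⟩ := hconn.preconnected ⟨x₀, hx⟩ ⟨y₀, hy⟩
  obtain ⟨x, y, hxA', hyA', hadj⟩ :=
    walk_crossing (A := {t : ↥(Sᶜ) | (t : V) ∈ A}) wk hxA hyA
  exact ⟨(x : V), (y : V), hxA', hyA', y.2, hadj⟩

end Crossing

end KempeAux



open KempeAux
open scoped Classical

/-- Matching `k`-colourings of a 3-connected graph of maximum degree at most `k ≥ 3`
are Kempe equivalent. -/
theorem matching_colourings_kempe_equiv {V : Type*} [Fintype V]
    (G : SimpleGraph V) [DecidableRel G.Adj] (k : ℕ) (hk : 3 ≤ k)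
    (h3 : ThreeConnected G) (hdeg : ∀ v : V, G.degree v ≤ k)
    (α β : V → Fin k) (hα : ProperCol G α) (hβ : ProperCol G β)
    (u v w : V) (huv : u ≠ v) (hwu : G.Adj w u) (hwv : G.Adj w v)
    (hα' : α u = α v) (hβ' : β u = β v) :
    KempeEquiv G α β := by
  have hnadj : ¬ G.Adj u v := fun h => hα h hα'
  set H := mergeGraph G u v with hHdef
  have hwune : w ≠ u := G.ne_of_adj hwu
  have hwvne : w ≠ v := G.ne_of_adj hwv
  -- α and β are proper colourings of the merged graph
  have hproper : ∀ γ : V → Fin k, ProperCol G γ → γ u = γ v → ProperCol H γ := by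
    intro γ hγ hγ' x y hxy
    rcases hxy.2.2.2 with h1 | ⟨hxu, h1⟩ | ⟨hyu, h1⟩
    · exact hγ h1
    · rw [hxu, hγ']; exact hγ h1
    · rw [hyu]; exact fun hh => hγ h1 (hh.trans hγ')
  have hαH : ProperCol H α := hproper α hα hα'
  have hβH : ProperCol H β := hproper β hβ hβ'
  -- the elimination property for the merged graph
  have helim : ∀ B : Finset V, B.Nonempty →
      ∃ p ∈ B, (B.filter (fun t => H.Adj p t)).card ≤ k - 1 := by
    intro B hne
    by_cases hvB : v ∈ B
    · refine ⟨v, hvB, ?_⟩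
      have : B.filter (fun t => H.Adj v t) = ∅ :=
        Finset.filter_false_of_mem (fun t _ hh => hh.1 rfl)
      rw [this, Finset.card_empty]
      exact Nat.zero_le _
    · by_cases hwB : w ∈ B
      · refine ⟨w, hwB, ?_⟩
        have hsub : B.filter (fun t => H.Adj w t) ⊆ (G.neighborFinset w).erase v := by
          intro t ht
          rw [Finset.mem_filter] at ht
          obtain ⟨htB, hadj⟩ := ht
          rcases hadj.2.2.2 with h1 | ⟨hwu', _⟩ | ⟨htu, _⟩
          · exact Finset.mem_erase.2 ⟨hadj.2.1, (G.mem_neighborFinset w t).2 h1⟩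
          · exact absurd hwu' hwune
          · rw [htu]
            exact Finset.mem_erase.2 ⟨huv, (G.mem_neighborFinset w u).2 hwu⟩
        have h1 : ((G.neighborFinset w).erase v).card = G.degree w - 1 := by
          rw [Finset.card_erase_of_mem ((G.mem_neighborFinset w v).2 hwv)]
          rfl
        have h2 := Finset.card_le_card hsub
        have h3 := hdeg w
        omega
      · by_cases hBu : ∀ x ∈ B, x = u
        · obtain ⟨x₀, hx₀⟩ := hne
          refine ⟨x₀, hx₀, ?_⟩
          have : B.filter (fun t => H.Adj x₀ t) = ∅ :=
            Finset.filter_false_of_mem (fun t htB hh =>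
              hh.2.2.1 ((hBu x₀ hx₀).trans (hBu t htB).symm))
          rw [this, Finset.card_empty]
          exact Nat.zero_le _
        · push_neg at hBu
          obtain ⟨x₀, hx₀B, hx₀u⟩ := hBu
          have hcon := h3.2 {u, v} (by
            have := Set.ncard_insert_le u {v}
            simpa [Set.ncard_singleton] using this)
          have hx₀S : x₀ ∈ ({u, v} : Set V)ᶜ := by
            simp only [Set.mem_compl_iff, Set.mem_insert_iff, Set.mem_singleton_iff]
            push_neg
            exact ⟨hx₀u, fun hh => hvB (hh ▸ hx₀B)⟩
          have hwS : w ∈ ({u, v} : Set V)ᶜ := by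
            simp only [Set.mem_compl_iff, Set.mem_insert_iff, Set.mem_singleton_iff]
            push_neg
            exact ⟨hwune, hwvne⟩
          obtain ⟨x, y, hxA, hyA, hyS, hxy⟩ := exists_crossing hcon
            (A := {t : V | t ∈ B ∧ t ≠ u}) hx₀S hwS ⟨hx₀B, hx₀u⟩
            (fun hh => hwB hh.1)
          simp only [Set.mem_compl_iff, Set.mem_insert_iff, Set.mem_singleton_iff] at hyS
          push_neg at hyS
          have hyB : y ∉ B := fun hh => hyA ⟨hh, hyS.1⟩
          obtain ⟨hxB, hxu⟩ := hxA
          have hxv : x ≠ v := fun hh => hvB (hh ▸ hxB)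
          refine ⟨x, hxB, ?_⟩
          have hcard : (B.filter (fun t => H.Adj x t)).card ≤
              ((G.neighborFinset x).erase y).card := by
            apply Finset.card_le_card_of_injOn (fun t => if G.Adj x t then t else v)
            · intro t ht
              rw [Finset.coe_filter] at ht
              show (if G.Adj x t then t else v) ∈ (G.neighborFinset x).erase y
              obtain ⟨htB, hadj⟩ := ht
              by_cases hgt : G.Adj x t
              · rw [if_pos hgt]
                exact Finset.mem_erase.2 ⟨fun hh => hyB (hh ▸ htB),
                  (G.mem_neighborFinset x t).2 hgt⟩
              · rw [if_neg hgt]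
                rcases hadj.2.2.2 with h1 | ⟨hxu', _⟩ | ⟨htu, h1⟩
                · exact absurd h1 hgt
                · exact absurd hxu' hxu
                · exact Finset.mem_erase.2 ⟨fun hh => hyS.2 hh.symm,
                    (G.mem_neighborFinset x v).2 h1⟩
            · intro t₁ ht₁ t₂ ht₂ hψ
              rw [Finset.coe_filter, Set.mem_setOf_eq] at ht₁ ht₂
              dsimp only at hψ
              split_ifs at hψ with h₁ h₂ h₂
              · exact hψ
              · exact absurd hψ ht₁.2.2.1
              · exact absurd hψ.symm ht₂.2.2.1
              · -- both equal to u
                rcases ht₁.2.2.2.2 with hh | ⟨hxu', _⟩ | ⟨htu₁, _⟩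
                · exact absurd hh h₁
                · exact absurd hxu' hxu
                · rcases ht₂.2.2.2.2 with hh | ⟨hxu', _⟩ | ⟨htu₂, _⟩
                  · exact absurd hh h₂
                  · exact absurd hxu' hxu
                  · rw [htu₁, htu₂]
          have h1 : ((G.neighborFinset x).erase y).card = G.degree x - 1 := by
            rw [Finset.card_erase_of_mem ((G.mem_neighborFinset x y).2 hxy)]
            rfl
          have h3 := hdeg x
          omega
  -- apply the Las Vergnas–Meyniel style induction in the merged graph
  have hαu : ProperCol (restr H ↑(Finset.univ : Finset V)) α :=
    properCol_mono (fun _ _ hh => hh.2.2) hαH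
  have hβu : ProperCol (restr H ↑(Finset.univ : Finset V)) β :=
    properCol_mono (fun _ _ hh => hh.2.2) hβH
  have hseq := lvm H helim Finset.univ α β hαu hβu
    (fun x hx => absurd (Finset.mem_univ x) hx)
  -- transfer the sequence back to `G`
  have hconv : ∀ {c c' : V → Fin k},
      Relation.ReflTransGen (StepOn H ↑(Finset.univ : Finset V)) c c' →
      Relation.ReflTransGen (KempeStep G) (c ∘ mergeMap u v) (c' ∘ mergeMap u v) := by
    intro c c' hsq
    induction hsq with
    | refl => exact Relation.ReflTransGen.refl
    | tail hpre hstep ih =>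
        rename_i mid fin
        refine ih.trans (simulate huv hnadj ?_)
        obtain ⟨a, b, z, hab, _, hz, hfor⟩ := hstep
        have hiff : ∀ t, KChain (restr H ↑(Finset.univ : Finset V)) mid a b z t ↔
            KChain H mid a b z t := fun t =>
          ⟨kchain_mono (fun _ _ hh => hh.2.2),
           kchain_mono (fun s₁ s₂ hh => ⟨by simp, by simp, hh⟩)⟩
        exact ⟨a, b, z, hab, hz, funext fun t => (hfor t).trans
          (if_congr (hiff t) rfl rfl)⟩
  have hαr : α ∘ mergeMap u v = α := by
    funext t
    by_cases htv : t = v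
    · rw [htv]; simp only [Function.comp_apply, mergeMap_v]; exact hα'
    · simp only [Function.comp_apply, mergeMap_eq htv]
  have hβr : β ∘ mergeMap u v = β := by
    funext t
    by_cases htv : t = v
    · rw [htv]; simp only [Function.comp_apply, mergeMap_v]; exact hβ'
    · simp only [Function.comp_apply, mergeMap_eq htv]
  have := hconv hseq
  rwa [hαr, hβr] at this
end

section
/- Every 3-connected cubic claw-free graph that is neither K4 nor the triangular prism is house-free (contains no induced 'house', i.e., a 5-cycle plus one chord joining two vertices at distance 2 on the cycle, equivalently the complement of P2 ∪ P3). -/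
open SimpleGraph

variable {V : Type*}

/-- `G` is claw-free: it has no induced `K_{1,3}`. -/
def ClawFree (G : SimpleGraph V) : Prop :=
  ¬ ∃ w u v s : V, G.Adj w u ∧ G.Adj w v ∧ G.Adj w s ∧
    u ≠ v ∧ u ≠ s ∧ v ≠ s ∧ ¬ G.Adj u v ∧ ¬ G.Adj u s ∧ ¬ G.Adj v s

section Helpers
variable {V : Type*}

lemma exists_third [Fintype V] (G : SimpleGraph V) [DecidableRel G.Adj] {v a b : V}
    (hd : G.degree v = 3) (ha : G.Adj v a) (hb : G.Adj v b) (hab : a ≠ b) :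
    ∃ c, G.Adj v c ∧ c ≠ a ∧ c ≠ b := by
  classical
  by_contra h
  push_neg at h
  have hsub : G.neighborFinset v ⊆ {a, b} := by
    intro c hc
    rw [SimpleGraph.mem_neighborFinset] at hc
    simp only [Finset.mem_insert, Finset.mem_singleton]
    by_cases hca : c = a
    · exact Or.inl hca
    · exact Or.inr (h c hc hca)
  have h2 := Finset.card_le_card hsub
  rw [SimpleGraph.card_neighborFinset_eq_degree, hd] at h2
  have : ({a, b} : Finset V).card ≤ 2 := Finset.card_insert_le _ _ |>.trans (by simp)
  omega

lemma nbrs_eq [Fintype V] (G : SimpleGraph V) [DecidableRel G.Adj] {v a b c : V}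
    (hd : G.degree v = 3) (ha : G.Adj v a) (hb : G.Adj v b) (hc : G.Adj v c)
    (hab : a ≠ b) (hac : a ≠ c) (hbc : b ≠ c) :
    ∀ u, G.Adj v u → u = a ∨ u = b ∨ u = c := by
  classical
  have hsub : ({a, b, c} : Finset V) ⊆ G.neighborFinset v := by
    intro u hu
    simp only [Finset.mem_insert, Finset.mem_singleton] at hu
    rw [SimpleGraph.mem_neighborFinset]
    rcases hu with rfl | rfl | rfl <;> assumption
  have hcard : ({a, b, c} : Finset V).card = 3 := by
    rw [Finset.card_insert_of_notMem (by simp [hab, hac]),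
      Finset.card_insert_of_notMem (by simp [hbc]), Finset.card_singleton]
  have heq : ({a, b, c} : Finset V) = G.neighborFinset v :=
    Finset.eq_of_subset_of_card_le hsub (by
      rw [SimpleGraph.card_neighborFinset_eq_degree, hd, hcard])
  intro u hu
  have : u ∈ ({a, b, c} : Finset V) := by
    rw [heq, SimpleGraph.mem_neighborFinset]; exact hu
  simpa using this

lemma reach_closed (G : SimpleGraph V) {S A : Set V}
    (hA : ∀ a ∈ A, ∀ b, G.Adj a b → b ∈ A ∪ S) {a b : V}
    (ha' : a ∈ Sᶜ) (hb' : b ∈ Sᶜ) (ha : a ∈ A)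
    (hr : (G.induce Sᶜ).Reachable ⟨a, ha'⟩ ⟨b, hb'⟩) : b ∈ A := by
  obtain ⟨wlk⟩ := hr
  have key : ∀ (u v : ↥(Sᶜ)) (_ : (G.induce Sᶜ).Walk u v), (u : V) ∈ A → (v : V) ∈ A := by
    intro u v wlk
    induction wlk with
    | nil => exact id
    | @cons u' v' w' h p ih =>
      intro hu
      apply ih
      have hadj : G.Adj u'.1 v'.1 := h
      rcases hA _ hu _ hadj with h1 | h2
      · exact h1
      · exact absurd h2 v'.2
  exact key _ _ wlk ha


end Helpers

set_option maxHeartbeats 1600000 in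
/-- Every 3-connected cubic claw-free graph other than `K₄` and the triangular prism is
house-free.  A house consists of vertices `x, y, z, w, s` with edges
`xy, xz, yz, yw, ws, sz` and no other edges. -/
theorem house_free {V : Type*} [Fintype V] (G : SimpleGraph V) [DecidableRel G.Adj]
    (hcub : ∀ v : V, G.degree v = 3) (h3 : ThreeConnected G) (hclaw : ClawFree G)
    (hK4 : ¬ Nonempty (G ≃g (⊤ : SimpleGraph (Fin 4))))
    (hprism : ¬ Nonempty (G ≃g prism)) :
    ¬ ∃ x y z w s : V,
      G.Adj x y ∧ G.Adj x z ∧ G.Adj y z ∧ G.Adj y w ∧ G.Adj w s ∧ G.Adj s z ∧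
      x ≠ w ∧ x ≠ s ∧ y ≠ s ∧ z ≠ w ∧
      ¬ G.Adj x w ∧ ¬ G.Adj x s ∧ ¬ G.Adj y s ∧ ¬ G.Adj z w := by
  rintro ⟨x, y, z, w, s, hxy, hxz, hyz, hyw, hws, hsz, nexw, nexs, neys, nezw,
    nxw, nxs, nys, nzw⟩
  classical
  -- basic distinctness
  have nexy : x ≠ y := hxy.ne
  have nexz : x ≠ z := hxz.ne
  have neyz : y ≠ z := hyz.ne
  have neyw : y ≠ w := hyw.ne
  have news : w ≠ s := hws.ne
  have nesz : s ≠ z := hsz.ne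
  -- third neighbour t of s
  obtain ⟨t, hst, netw, netz⟩ := exists_third G (hcub s) hws.symm hsz nezw.symm
  have netx : t ≠ x := fun h => nxs (h ▸ hst).symm
  have nety : t ≠ y := fun h => nys (h ▸ hst).symm
  have nest : s ≠ t := hst.ne
  -- neighbours of z are exactly x, y, s
  have hznbrs := nbrs_eq G (hcub z) hxz.symm hyz.symm hsz.symm nexy
    (fun h => nexs h) (fun h => neys h)
  have nzt : ¬ G.Adj z t := fun h => by
    rcases hznbrs t h with h | h | h
    · exact netx h
    · exact nety h
    · exact nest h.symm
  -- claw at s forces w ~ t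
  have hwt : G.Adj w t := by
    by_contra hwt
    exact hclaw ⟨s, z, w, t, hsz, hws.symm, hst, nezw, netz.symm,
      netw.symm, nzw, nzt, hwt⟩
  -- neighbour lists
  have hynbrs := nbrs_eq G (hcub y) hxy.symm hyz hyw nexz nexw nezw
  have hwnbrs := nbrs_eq G (hcub w) hyw.symm hws hwt neys nety.symm nest
  have hsnbrs := nbrs_eq G (hcub s) hws.symm hsz hst nezw.symm netw.symm netz.symm
  have nyt : ¬ G.Adj y t := fun h => by
    rcases hynbrs t h with h | h | h
    · exact netx h
    · exact netz h
    · exact netw h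
  -- third neighbour p of x
  obtain ⟨p, hxp, nepy, nepz⟩ := exists_third G (hcub x) hxy hxz neyz
  have hxnbrs := nbrs_eq G (hcub x) hxy hxz hxp neyz nepy.symm nepz.symm
  have nepx : p ≠ x := hxp.ne'
  have nepw : p ≠ w := fun h => nxw (h ▸ hxp)
  have neps : p ≠ s := fun h => nxs (h ▸ hxp)
  -- third neighbour u of t
  obtain ⟨u, htu, neuw, neus⟩ := exists_third G (hcub t) hwt.symm hst.symm news
  have neut : u ≠ t := htu.ne'
  have neuy : u ≠ y := fun h => nyt (h ▸ htu).symm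
  have neuz : u ≠ z := fun h => nzt (h ▸ htu).symm
  -- symmetric forms of adjacency facts
  have hxt' := hxz
  by_cases hpt : p = t
  · -- CASE 1 : x ~ t, the graph is the prism
    have hxt : G.Adj x t := hpt ▸ hxp
    have htnbrs := nbrs_eq G (hcub t) hwt.symm hst.symm hxt.symm news nexw.symm nexs.symm
    set A : Set V := {x, y, z, w, s, t} with hA
    have closed : ∀ a ∈ A, ∀ b, G.Adj a b → b ∈ A ∪ (∅ : Set V) := by
      intro a ha b hb
      simp only [hA, Set.mem_insert_iff, Set.mem_singleton_iff] at ha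
      rw [Set.union_empty]
      rcases ha with rfl|rfl|rfl|rfl|rfl|rfl
      · rcases hxnbrs b hb with rfl|rfl|rfl <;> simp [hA, hpt]
      · rcases hynbrs b hb with rfl|rfl|rfl <;> simp [hA]
      · rcases hznbrs b hb with rfl|rfl|rfl <;> simp [hA]
      · rcases hwnbrs b hb with rfl|rfl|rfl <;> simp [hA]
      · rcases hsnbrs b hb with rfl|rfl|rfl <;> simp [hA]
      · rcases htnbrs b hb with rfl|rfl|rfl <;> simp [hA]
    have hconn := (h3.2 ∅ (by simp)).preconnected
    have hall : ∀ v : V, v ∈ A := by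
      intro v
      have hx' : x ∈ (∅ : Set V)ᶜ := by simp
      have hv' : v ∈ (∅ : Set V)ᶜ := by simp
      exact reach_closed G closed hx' hv' (by simp [hA]) (hconn ⟨x, hx'⟩ ⟨v, hv'⟩)
    -- build the isomorphism with the prism
    set g : Fin 6 → V := ![x, y, z, t, w, s] with hg
    have hgb : Function.Bijective g := by
      constructor
      · intro i j hij
        fin_cases i <;> fin_cases j <;>
          first
            | rfl
            | exact absurd hij nexy | exact absurd hij.symm nexy
            | exact absurd hij nexz | exact absurd hij.symm nexz
            | exact absurd hij hxt.ne | exact absurd hij.symm hxt.ne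
            | exact absurd hij nexw | exact absurd hij.symm nexw
            | exact absurd hij nexs | exact absurd hij.symm nexs
            | exact absurd hij neyz | exact absurd hij.symm neyz
            | exact absurd hij nety.symm | exact absurd hij.symm nety.symm
            | exact absurd hij neyw | exact absurd hij.symm neyw
            | exact absurd hij neys | exact absurd hij.symm neys
            | exact absurd hij netz.symm | exact absurd hij.symm netz.symm
            | exact absurd hij nezw | exact absurd hij.symm nezw
            | exact absurd hij nesz.symm | exact absurd hij.symm nesz.symm
            | exact absurd hij netw | exact absurd hij.symm netw
            | exact absurd hij nest.symm | exact absurd hij.symm nest.symm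
            | exact absurd hij news | exact absurd hij.symm news
      · intro v
        rcases hall v with rfl|h
        · exact ⟨0, rfl⟩
        rcases h with rfl|h
        · exact ⟨1, rfl⟩
        rcases h with rfl|h
        · exact ⟨2, rfl⟩
        rcases h with rfl|h
        · exact ⟨4, rfl⟩
        rcases h with rfl|rfl
        · exact ⟨5, rfl⟩
        · exact ⟨3, rfl⟩
    have hyx := hxy.symm; have hzx := hxz.symm; have hzy := hyz.symm
    have htw := hwt.symm; have hts := hst.symm; have hsw := hws.symm
    have htx := hxt.symm; have hwy := hyw.symm; have hzs := hsz.symm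
    have nwx : ¬ G.Adj w x := fun h => nxw h.symm
    have nsx : ¬ G.Adj s x := fun h => nxs h.symm
    have nty : ¬ G.Adj t y := fun h => nyt h.symm
    have nsy : ¬ G.Adj s y := fun h => nys h.symm
    have ntz : ¬ G.Adj t z := fun h => nzt h.symm
    have nwz : ¬ G.Adj w z := fun h => nzw h.symm
    have hadj : ∀ i j : Fin 6, prism.Adj i j ↔ G.Adj (g i) (g j) := by
      intro i j
      fin_cases i <;> fin_cases j <;>
        simp (config := { decide := true }) [prism, hg, SimpleGraph.fromRel_adj] <;>
        first
          | assumption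
          | exact G.irrefl
    refine hprism ⟨⟨(Equiv.ofBijective g hgb).symm, ?_⟩⟩
    intro a b
    have hga : ∀ v, g ((Equiv.ofBijective g hgb).symm v) = v := fun v =>
      (Equiv.ofBijective g hgb).apply_symm_apply v
    rw [hadj, hga, hga]
  · -- CASE 2 : {p, u} is a 2-cut
    have nxt : ¬ G.Adj x t := fun h => by
      rcases hxnbrs t h with h | h | h
      · exact nety h
      · exact netz h
      · exact hpt h.symm
    have neux : u ≠ x := fun h => nxt (h ▸ htu).symm
    have htnbrs := nbrs_eq G (hcub t) hwt.symm hst.symm htu news neuw.symm neus.symm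
    set S : Set V := {p, u} with hS
    have hS2 : S.ncard ≤ 2 := (Set.ncard_insert_le _ _).trans (by simp)
    set A : Set V := {x, y, z, w, s, t} with hA
    have closed : ∀ a ∈ A, ∀ b, G.Adj a b → b ∈ A ∪ S := by
      intro a ha b hb
      simp only [hA, Set.mem_insert_iff, Set.mem_singleton_iff] at ha
      rcases ha with rfl|rfl|rfl|rfl|rfl|rfl
      · rcases hxnbrs b hb with rfl|rfl|rfl <;> simp [hA, hS]
      · rcases hynbrs b hb with rfl|rfl|rfl <;> simp [hA, hS]
      · rcases hznbrs b hb with rfl|rfl|rfl <;> simp [hA, hS]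
      · rcases hwnbrs b hb with rfl|rfl|rfl <;> simp [hA, hS]
      · rcases hsnbrs b hb with rfl|rfl|rfl <;> simp [hA, hS]
      · rcases htnbrs b hb with rfl|rfl|rfl <;> simp [hA, hS]
    -- p and u are not in A
    have hpA : p ∉ A := by
      simp only [hA, Set.mem_insert_iff, Set.mem_singleton_iff]
      push_neg
      exact ⟨nepx, nepy, nepz, nepw, neps, hpt⟩
    have huA : u ∉ A := by
      simp only [hA, Set.mem_insert_iff, Set.mem_singleton_iff]
      push_neg
      exact ⟨neux, neuy, neuz, neuw, neus, neut⟩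
    -- there is a vertex outside A ∪ S
    have hex : ∃ r, r ∉ A ∧ r ∉ S := by
      by_contra hno
      push_neg at hno
      -- every neighbour of p lies in {x, u} (or {x, t} if p = u)
      have hpn : ∀ q, G.Adj p q → q = x ∨ q = u ∨ (q = t ∧ p = u) := by
        intro q hq
        by_cases hqA : q ∈ A
        · simp only [hA, Set.mem_insert_iff, Set.mem_singleton_iff] at hqA
          rcases hqA with rfl|rfl|rfl|rfl|rfl|rfl
          · exact Or.inl rfl
          · rcases hynbrs p hq.symm with rfl|rfl|rfl
            · exact absurd rfl nepx
            · exact absurd rfl nepz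
            · exact absurd rfl nepw
          · rcases hznbrs p hq.symm with rfl|rfl|rfl
            · exact absurd rfl nepx
            · exact absurd rfl nepy
            · exact absurd rfl neps
          · rcases hwnbrs p hq.symm with rfl|rfl|rfl
            · exact absurd rfl nepy
            · exact absurd rfl neps
            · exact absurd rfl hpt
          · rcases hsnbrs p hq.symm with rfl|rfl|rfl
            · exact absurd rfl nepw
            · exact absurd rfl nepz
            · exact absurd rfl hpt
          · rcases htnbrs p hq.symm with rfl|rfl|rfl
            · exact absurd rfl nepw
            · exact absurd rfl neps
            · exact Or.inr (Or.inr ⟨rfl, rfl⟩)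
        · have := hno q hqA
          simp only [hS, Set.mem_insert_iff, Set.mem_singleton_iff] at this
          rcases this with rfl | rfl
          · exact absurd rfl hq.ne'
          · exact Or.inr (Or.inl rfl)
      by_cases hpu : p = u
      · have hsub : G.neighborFinset p ⊆ {x, t} := by
          intro q hq
          rw [SimpleGraph.mem_neighborFinset] at hq
          rcases hpn q hq with rfl | rfl | ⟨rfl, _⟩
          · simp
          · exact absurd hpu.symm hq.ne'
          · simp
        have h2 := Finset.card_le_card hsub
        rw [SimpleGraph.card_neighborFinset_eq_degree, hcub] at h2
        have : ({x, t} : Finset V).card ≤ 2 := Finset.card_insert_le _ _ |>.trans (by simp)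
        omega
      · have hsub : G.neighborFinset p ⊆ {x, u} := by
          intro q hq
          rw [SimpleGraph.mem_neighborFinset] at hq
          rcases hpn q hq with rfl | rfl | ⟨_, rfl⟩
          · simp
          · simp
          · exact absurd rfl hpu
        have h2 := Finset.card_le_card hsub
        rw [SimpleGraph.card_neighborFinset_eq_degree, hcub] at h2
        have : ({x, u} : Finset V).card ≤ 2 := Finset.card_insert_le _ _ |>.trans (by simp)
        omega
    obtain ⟨r, hrA, hrS⟩ := hex
    have hconn := (h3.2 S hS2).preconnected
    have hx' : x ∈ Sᶜ := by
      simp only [hS, Set.mem_compl_iff, Set.mem_insert_iff, Set.mem_singleton_iff]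
      push_neg
      exact ⟨nepx.symm, neux.symm⟩
    have hr' : r ∈ Sᶜ := hrS
    exact hrA (reach_closed G closed hx' hr' (by simp [hA]) (hconn ⟨x, hx'⟩ ⟨r, hr'⟩))
end

section
/- Every 3-connected cubic claw-free graph that is neither K4 nor the triangular prism contains an induced net (a triangle with a pendant vertex attached to each triangle vertex, with the three pendant vertices distinct and pairwise non-adjacent). -/
open SimpleGraph

variable {V : Type*}

section
variable {W : Type*} [Fintype W] (G : SimpleGraph W) [DecidableRel G.Adj]

lemma nbrs3 (hcub : ∀ v, G.degree v = 3) (v : W) :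
    ∃ a b c : W, a ≠ b ∧ a ≠ c ∧ b ≠ c ∧ ∀ u, G.Adj v u ↔ u = a ∨ u = b ∨ u = c := by
  classical
  have h : (G.neighborFinset v).card = 3 := hcub v
  obtain ⟨a,b,c,hab,hac,hbc,hset⟩ := Finset.card_eq_three.mp h
  refine ⟨a,b,c,hab,hac,hbc, fun u => ?_⟩
  rw [← SimpleGraph.mem_neighborFinset, hset]; simp

lemma third_nbr (hcub : ∀ v, G.degree v = 3) {v a b : W} (ha : G.Adj v a) (hb : G.Adj v b)
    (hab : a ≠ b) :
    ∃ c, c ≠ a ∧ c ≠ b ∧ ∀ u, G.Adj v u ↔ u = a ∨ u = b ∨ u = c := by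
  classical
  have h : (G.neighborFinset v).card = 3 := hcub v
  have hmem : ∀ u, u ∈ G.neighborFinset v ↔ G.Adj v u := fun u => G.mem_neighborFinset v u
  have hne : (G.neighborFinset v \ {a, b}).Nonempty := by
    rw [← Finset.card_pos]
    have h2 : ({a, b} : Finset W).card ≤ 2 := Finset.card_insert_le _ _ |>.trans (by simp)
    have := Finset.le_card_sdiff ({a,b} : Finset W) (G.neighborFinset v)
    omega
  obtain ⟨c, hc⟩ := hne
  rw [Finset.mem_sdiff, Finset.mem_insert, Finset.mem_singleton] at hc
  obtain ⟨hcN, hcab⟩ := hc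
  push_neg at hcab
  have hsub : ({a, b, c} : Finset W) ⊆ G.neighborFinset v := by
    intro u hu
    simp only [Finset.mem_insert, Finset.mem_singleton] at hu
    rcases hu with rfl|rfl|rfl
    · exact (hmem u).2 ha
    · exact (hmem u).2 hb
    · exact hcN
  have hcard : ({a, b, c} : Finset W).card = 3 := by
    rw [Finset.card_insert_of_notMem (by simp [hab, hcab.1.symm]),
      Finset.card_insert_of_notMem (by simp [hcab.2.symm]), Finset.card_singleton]
  have heq : ({a,b,c} : Finset W) = G.neighborFinset v :=
    Finset.eq_of_subset_of_card_le hsub (by omega)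
  refine ⟨c, hcab.1, hcab.2, fun u => ?_⟩
  rw [← hmem, ← heq]; simp

lemma two_more (hcub : ∀ v, G.degree v = 3) {v z : W} (h : G.Adj v z) :
    ∃ p q, p ≠ q ∧ p ≠ z ∧ q ≠ z ∧ G.Adj v p ∧ G.Adj v q := by
  classical
  have h3 : (G.neighborFinset v).card = 3 := hcub v
  have hne : 1 < (G.neighborFinset v \ {z}).card := by
    have := Finset.le_card_sdiff ({z} : Finset W) (G.neighborFinset v)
    simp only [Finset.card_singleton] at this
    omega
  obtain ⟨p, hp, q, hq, hpq⟩ := Finset.one_lt_card.mp hne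
  rw [Finset.mem_sdiff, Finset.mem_singleton] at hp hq
  exact ⟨p, q, hpq, hp.2, hq.2, (G.mem_neighborFinset v p).1 hp.1,
    (G.mem_neighborFinset v q).1 hq.1⟩
end


section
variable {W : Type*} [Fintype W] (G : SimpleGraph W)

lemma cut_lemma (h3 : ThreeConnected G) (S A : Set W) (hS : S.ncard ≤ 2)
    (x₀ : W) (hx₀ : x₀ ∈ A) (hAS : ∀ a ∈ A, a ∉ S)
    (hclosed : ∀ u ∈ A, ∀ v, G.Adj u v → v ∈ S ∨ v ∈ A)
    (s : W) (hsA : s ∉ A) (hsS : s ∉ S) : False := by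
  have hc := (h3.2 S hS)
  obtain ⟨w⟩ := hc.preconnected ⟨x₀, hAS _ hx₀⟩ ⟨s, hsS⟩
  have key : ∀ {p q : ↥(Sᶜ)} (_ : (G.induce Sᶜ).Walk p q), p.1 ∈ A → q.1 ∈ A := by
    intro p q w
    induction w with
    | nil => exact id
    | @cons u v r h w ih =>
      intro hu
      apply ih
      rcases hclosed u.1 hu v.1 h with hv | hv
      · exact absurd hv v.2
      · exact hv
  exact hsA (key w hx₀)
end

section
variable {W : Type*} [Fintype W] (G : SimpleGraph W) [DecidableRel G.Adj]

lemma diamond_case (hcub : ∀ v, G.degree v = 3) (h3 : ThreeConnected G)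
    {x y z w z' t : W}
    (hx : ∀ u, G.Adj x u ↔ u = y ∨ u = z ∨ u = w)
    (hy : ∀ u, G.Adj y u ↔ u = x ∨ u = z ∨ u = w)
    (hz : ∀ u, G.Adj z u ↔ u = x ∨ u = y ∨ u = z')
    (hw : ∀ u, G.Adj w u ↔ u = x ∨ u = y ∨ u = t)
    (hz'x : z' ≠ x) (hz'y : z' ≠ y) (htx : t ≠ x) (hty : t ≠ y)
    (hz'w : z' ≠ w) : False := by
  have axy : G.Adj x y := (hx y).2 (Or.inl rfl)
  have axz : G.Adj x z := (hx z).2 (Or.inr (Or.inl rfl))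
  have axw : G.Adj x w := (hx w).2 (Or.inr (Or.inr rfl))
  have ayz : G.Adj y z := (hy z).2 (Or.inr (Or.inl rfl))
  have ayw : G.Adj y w := (hy w).2 (Or.inr (Or.inr rfl))
  have azz' : G.Adj z z' := (hz z').2 (Or.inr (Or.inr rfl))
  have awt : G.Adj w t := (hw t).2 (Or.inr (Or.inr rfl))
  have hwx : w ≠ x := (G.ne_of_adj axw).symm
  have hwy : w ≠ y := (G.ne_of_adj ayw).symm
  have hz'z : z' ≠ z := (G.ne_of_adj azz').symm
  have htw : t ≠ w := (G.ne_of_adj awt).symm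
  -- t ≠ z : else w adj z, so by hz, w ∈ {x,y,z'}
  have htz : t ≠ z := by
    rintro rfl
    rcases (hz w).1 awt.symm with h|h|h
    · exact hwx h
    · exact hwy h
    · exact hz'w h.symm
  set A : Set W := {x, y, z, w} with hA
  set S : Set W := {z', t} with hSdef
  have hmemA : ∀ u, u ∈ A ↔ u = x ∨ u = y ∨ u = z ∨ u = w := by
    intro u; simp [hA]
  have hmemS : ∀ u, u ∈ S ↔ u = z' ∨ u = t := by intro u; simp [hSdef]
  have hSA : ∀ a ∈ A, a ∉ S := by
    intro a ha hs
    rw [hmemA] at ha; rw [hmemS] at hs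
    rcases hs with rfl|rfl
    · rcases ha with rfl|rfl|rfl|rfl
      · exact hz'x rfl
      · exact hz'y rfl
      · exact hz'z rfl
      · exact hz'w rfl
    · rcases ha with rfl|rfl|rfl|rfl
      · exact htx rfl
      · exact hty rfl
      · exact htz rfl
      · exact htw rfl
  have hclosed : ∀ u ∈ A, ∀ v, G.Adj u v → v ∈ S ∨ v ∈ A := by
    intro u hu v hadj
    rw [hmemA] at hu
    rw [hmemS, hmemA]
    rcases hu with rfl|rfl|rfl|rfl
    · rcases (hx v).1 hadj with rfl|rfl|rfl <;> tauto
    · rcases (hy v).1 hadj with rfl|rfl|rfl <;> tauto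
    · rcases (hz v).1 hadj with rfl|rfl|rfl <;> tauto
    · rcases (hw v).1 hadj with rfl|rfl|rfl <;> tauto
  -- find a vertex outside A ∪ S among the neighborhood of z'
  obtain ⟨p, q, hpq, hpz, hqz, hap, haq⟩ := two_more G hcub azz'.symm
  have claim : ∀ r, G.Adj z' r → r ≠ z → r ∈ A ∨ r ∈ S → r = t ∨ (r = w ∧ z' = t) := by
    intro r hr hrz hmem
    rcases hmem with hm | hm
    · rw [hmemA] at hm
      rcases hm with rfl|rfl|rfl|rfl
      · rcases (hx z').1 hr.symm with h|h|h
        · exact absurd h hz'y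
        · exact absurd h hz'z
        · exact absurd h hz'w
      · rcases (hy z').1 hr.symm with h|h|h
        · exact absurd h hz'x
        · exact absurd h hz'z
        · exact absurd h hz'w
      · exact absurd rfl hrz
      · rcases (hw z').1 hr.symm with h|h|h
        · exact absurd h hz'x
        · exact absurd h hz'y
        · exact Or.inr ⟨rfl, h⟩
    · rw [hmemS] at hm
      rcases hm with rfl|rfl
      · exact absurd rfl (G.ne_of_adj hr).symm
      · exact Or.inl rfl
  have hout : ∃ s, s ∉ A ∧ s ∉ S := by
    by_contra hcon
    push_neg at hcon
    have hp' := claim p hap hpz (by by_cases h : p ∈ A; exact Or.inl h; exact Or.inr (hcon p h))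
    have hq' := claim q haq hqz (by by_cases h : q ∈ A; exact Or.inl h; exact Or.inr (hcon q h))
    rcases hp' with rfl | ⟨rfl, h1⟩ <;> rcases hq' with h2 | ⟨rfl, h2⟩
    · exact hpq h2.symm
    · exact (G.ne_of_adj hap).symm h2.symm
    · exact (G.ne_of_adj haq).symm (h2.trans h1.symm)
    · exact hpq rfl
  obtain ⟨s, hsA, hsS⟩ := hout
  have hSc : S.ncard ≤ 2 := by
    rw [hSdef]
    exact (Set.ncard_insert_le _ _).trans (by simp)
  exact cut_lemma G h3 S A hSc x (by rw [hmemA]; tauto) hSA hclosed s hsA hsS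
set_option maxHeartbeats 1000000 in
lemma one_edge_case (hcub : ∀ v, G.degree v = 3) (h3 : ThreeConnected G)
    (hclaw : ¬ ∃ w u v s : W, G.Adj w u ∧ G.Adj w v ∧ G.Adj w s ∧
      u ≠ v ∧ u ≠ s ∧ v ≠ s ∧ ¬ G.Adj u v ∧ ¬ G.Adj u s ∧ ¬ G.Adj v s)
    {x y z x' y' z' : W}
    (hx : ∀ u, G.Adj x u ↔ u = y ∨ u = z ∨ u = x')
    (hy : ∀ u, G.Adj y u ↔ u = x ∨ u = z ∨ u = y')
    (hz : ∀ u, G.Adj z u ↔ u = x ∨ u = y ∨ u = z')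
    (hx'y : x' ≠ y) (hx'z : x' ≠ z) (hy'x : y' ≠ x) (hy'z : y' ≠ z)
    (hz'x : z' ≠ x) (hz'y : z' ≠ y)
    (hx'y' : x' ≠ y') (hx'z' : x' ≠ z') (hy'z' : y' ≠ z')
    (e1 : G.Adj x' y') (e2 : ¬ G.Adj x' z') (e3 : ¬ G.Adj y' z') : False := by
  have axy : G.Adj x y := (hx y).2 (Or.inl rfl)
  have axz : G.Adj x z := (hx z).2 (Or.inr (Or.inl rfl))
  have axx' : G.Adj x x' := (hx x').2 (Or.inr (Or.inr rfl))
  have ayz : G.Adj y z := (hy z).2 (Or.inr (Or.inl rfl))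
  have ayy' : G.Adj y y' := (hy y').2 (Or.inr (Or.inr rfl))
  have azz' : G.Adj z z' := (hz z').2 (Or.inr (Or.inr rfl))
  have hy'y : y' ≠ y := (G.ne_of_adj ayy').symm
  have hz'z : z' ≠ z := (G.ne_of_adj azz').symm
  have hx'x : x' ≠ x := (G.ne_of_adj axx').symm
  have nxy' : ¬ G.Adj x y' := by
    intro h; rcases (hx y').1 h with h'|h'|h'
    · exact hy'y h'
    · exact hy'z h'
    · exact hx'y' h'.symm
  have nyx' : ¬ G.Adj y x' := by
    intro h; rcases (hy x').1 h with h'|h'|h'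
    · exact hx'x h'
    · exact hx'z h'
    · exact hx'y' h'
  have nzx' : ¬ G.Adj z x' := by
    intro h; rcases (hz x').1 h with h'|h'|h'
    · exact hx'x h'
    · exact hx'y h'
    · exact hx'z' h'
  have nzy' : ¬ G.Adj z y' := by
    intro h; rcases (hz y').1 h with h'|h'|h'
    · exact hy'x h'
    · exact hy'y h'
    · exact hy'z' h'
  obtain ⟨t, htx, hty', hx'⟩ := third_nbr G hcub axx'.symm e1 hy'x.symm
  have at' : G.Adj x' t := (hx' t).2 (Or.inr (Or.inr rfl))
  have hty : t ≠ y := fun h => nyx' (h ▸ at').symm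
  have htz : t ≠ z := fun h => nzx' (h ▸ at').symm
  have htx' : t ≠ x' := (G.ne_of_adj at').symm
  have htz' : t ≠ z' := fun h => e2 (h ▸ at')
  have nxt : ¬ G.Adj x t := by
    intro h; rcases (hx t).1 h with h'|h'|h'
    · exact hty h'
    · exact htz h'
    · exact htx' h'
  have ay't : G.Adj y' t := by
    by_contra nyt
    exact hclaw ⟨x', x, y', t, axx'.symm, e1, at', hy'x.symm, htx.symm, hty'.symm,
      nxy', nxt, nyt⟩
  have hy' : ∀ u, G.Adj y' u ↔ u = y ∨ u = x' ∨ u = t := by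
    obtain ⟨c, hcy, hcx', hych⟩ := third_nbr G hcub ayy'.symm e1.symm hx'y.symm
    rcases (hych t).1 ay't with h|h|h
    · exact absurd h hty
    · exact absurd h htx'
    · exact h ▸ hych
  obtain ⟨s, hsx', hsy', ht⟩ := third_nbr G hcub at'.symm ay't.symm hx'y'
  have ats : G.Adj t s := (ht s).2 (Or.inr (Or.inr rfl))
  have nyt : ¬ G.Adj y t := by
    intro h; rcases (hy t).1 h with h'|h'|h'
    · exact htx h'
    · exact htz h'
    · exact hty' h'
  have nzt : ¬ G.Adj z t := by
    intro h; rcases (hz t).1 h with h'|h'|h'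
    · exact htx h'
    · exact hty h'
    · exact htz' h'
  have hsx : s ≠ x := fun h => nxt (h ▸ ats).symm
  have hsy : s ≠ y := fun h => nyt (h ▸ ats).symm
  have hsz : s ≠ z := fun h => nzt (h ▸ ats).symm
  have hst : s ≠ t := (G.ne_of_adj ats).symm
  set A : Set W := {x, y, z, x', y', t} with hA
  set S : Set W := {z', s} with hSdef
  have hmemA : ∀ u, u ∈ A ↔ u = x ∨ u = y ∨ u = z ∨ u = x' ∨ u = y' ∨ u = t := by
    intro u; simp [hA]
  have hmemS : ∀ u, u ∈ S ↔ u = z' ∨ u = s := by intro u; simp [hSdef]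
  have hSA : ∀ a ∈ A, a ∉ S := by
    intro a ha hs
    rw [hmemA] at ha; rw [hmemS] at hs
    rcases hs with rfl|rfl
    · rcases ha with rfl|rfl|rfl|rfl|rfl|rfl
      · exact hz'x rfl
      · exact hz'y rfl
      · exact hz'z rfl
      · exact hx'z' rfl.symm
      · exact hy'z' rfl.symm
      · exact htz' rfl.symm
    · rcases ha with rfl|rfl|rfl|rfl|rfl|rfl
      · exact hsx rfl
      · exact hsy rfl
      · exact hsz rfl
      · exact hsx' rfl
      · exact hsy' rfl
      · exact hst rfl
  have hclosed : ∀ u ∈ A, ∀ v, G.Adj u v → v ∈ S ∨ v ∈ A := by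
    intro u hu v hadj
    rw [hmemA] at hu
    rw [hmemS, hmemA]
    rcases hu with rfl|rfl|rfl|rfl|rfl|rfl
    · rcases (hx v).1 hadj with rfl|rfl|rfl <;> tauto
    · rcases (hy v).1 hadj with rfl|rfl|rfl <;> tauto
    · rcases (hz v).1 hadj with rfl|rfl|rfl <;> tauto
    · rcases (hx' v).1 hadj with rfl|rfl|rfl <;> tauto
    · rcases (hy' v).1 hadj with rfl|rfl|rfl <;> tauto
    · rcases (ht v).1 hadj with rfl|rfl|rfl <;> tauto
  obtain ⟨p, q, hpq, hpz, hqz, hap, haq⟩ := two_more G hcub azz'.symm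
  have claim : ∀ r, G.Adj z' r → r ≠ z → r ∈ A ∨ r ∈ S → r = s ∨ (r = t ∧ z' = s) := by
    intro r hr hrz hmem
    rcases hmem with hm | hm
    · rw [hmemA] at hm
      rcases hm with rfl|rfl|rfl|rfl|rfl|rfl
      · rcases (hx z').1 hr.symm with h|h|h
        · exact absurd h hz'y
        · exact absurd h hz'z
        · exact absurd h.symm hx'z'
      · rcases (hy z').1 hr.symm with h|h|h
        · exact absurd h hz'x
        · exact absurd h hz'z
        · exact absurd h.symm hy'z'
      · exact absurd rfl hrz
      · exact absurd hr.symm e2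
      · exact absurd hr.symm e3
      · rcases (ht z').1 hr.symm with h|h|h
        · exact absurd h.symm hx'z'
        · exact absurd h.symm hy'z'
        · exact Or.inr ⟨rfl, h⟩
    · rw [hmemS] at hm
      rcases hm with rfl|rfl
      · exact absurd rfl (G.ne_of_adj hr).symm
      · exact Or.inl rfl
  have hout : ∃ s₀, s₀ ∉ A ∧ s₀ ∉ S := by
    by_contra hcon
    push_neg at hcon
    have hp' := claim p hap hpz (by by_cases h : p ∈ A; exact Or.inl h; exact Or.inr (hcon p h))
    have hq' := claim q haq hqz (by by_cases h : q ∈ A; exact Or.inl h; exact Or.inr (hcon q h))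
    rcases hp' with rfl | ⟨rfl, h1⟩ <;> rcases hq' with h2 | ⟨rfl, h2⟩
    · exact hpq h2.symm
    · exact (G.ne_of_adj hap).symm h2.symm
    · exact (G.ne_of_adj haq).symm (h2.trans h1.symm)
    · exact hpq rfl
  obtain ⟨s₀, hs₀A, hs₀S⟩ := hout
  have hSc : S.ncard ≤ 2 := by
    rw [hSdef]
    exact (Set.ncard_insert_le _ _).trans (by simp)
  exact cut_lemma G h3 S A hSc x (by rw [hmemA]; tauto) hSA hclosed s₀ hs₀A hs₀S
lemma k4_case (hcub : ∀ v, G.degree v = 3) (h3 : ThreeConnected G)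
    {x y z x' : W}
    (hx : ∀ u, G.Adj x u ↔ u = y ∨ u = z ∨ u = x')
    (hy : ∀ u, G.Adj y u ↔ u = x ∨ u = z ∨ u = x')
    (hz : ∀ u, G.Adj z u ↔ u = x ∨ u = y ∨ u = x') :
    Nonempty (G ≃g (⊤ : SimpleGraph (Fin 4))) := by
  classical
  have axy : G.Adj x y := (hx y).2 (Or.inl rfl)
  have axz : G.Adj x z := (hx z).2 (Or.inr (Or.inl rfl))
  have axx' : G.Adj x x' := (hx x').2 (Or.inr (Or.inr rfl))
  have ayz : G.Adj y z := (hy z).2 (Or.inr (Or.inl rfl))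
  have ayx' : G.Adj y x' := (hy x').2 (Or.inr (Or.inr rfl))
  have azx' : G.Adj z x' := (hz x').2 (Or.inr (Or.inr rfl))
  have hw : ∀ u, G.Adj x' u ↔ u = x ∨ u = y ∨ u = z := by
    obtain ⟨c, hcx, hcy, hch⟩ := third_nbr G hcub axx'.symm ayx'.symm (G.ne_of_adj axy)
    rcases (hch z).1 azx'.symm with h|h|h
    · exact absurd h (G.ne_of_adj axz).symm
    · exact absurd h (G.ne_of_adj ayz).symm
    · exact h ▸ hch
  set A : Set W := {x, y, z, x'} with hA
  have hmemA : ∀ u, u ∈ A ↔ u = x ∨ u = y ∨ u = z ∨ u = x' := by intro u; simp [hA]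
  have hclosed : ∀ u ∈ A, ∀ v, G.Adj u v → v ∈ (∅ : Set W) ∨ v ∈ A := by
    intro u hu v hadj
    rw [hmemA] at hu
    rw [hmemA]
    rcases hu with rfl|rfl|rfl|rfl
    · rcases (hx v).1 hadj with rfl|rfl|rfl <;> tauto
    · rcases (hy v).1 hadj with rfl|rfl|rfl <;> tauto
    · rcases (hz v).1 hadj with rfl|rfl|rfl <;> tauto
    · rcases (hw v).1 hadj with rfl|rfl|rfl <;> tauto
  have hall : ∀ v : W, v ∈ A := by
    intro v
    by_contra hv
    exact cut_lemma G h3 ∅ A (by simp) x (by rw [hmemA]; tauto)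
      (fun a _ h => h) hclosed v hv (by simp)
  have hadjall : ∀ a b : W, a ≠ b → G.Adj a b := by
    have a1 := axy.symm; have a2 := axz.symm; have a3 := axx'.symm
    have a4 := ayz.symm; have a5 := ayx'.symm; have a6 := azx'.symm
    intro a b hne
    rcases (hmemA a).1 (hall a) with rfl|rfl|rfl|rfl <;>
      rcases (hmemA b).1 (hall b) with rfl|rfl|rfl|rfl <;>
      first | exact absurd rfl hne | assumption
  have hcard : Fintype.card W = 4 := by
    have hle : Fintype.card W ≤ 4 := by
      have hsub : (Finset.univ : Finset W) ⊆ {x, y, z, x'} := by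
        intro v _
        rcases (hmemA v).1 (hall v) with rfl|rfl|rfl|rfl <;> simp
      have h1 := Finset.card_le_card hsub
      have c1 : ({x'} : Finset W).card = 1 := Finset.card_singleton _
      have c2 := Finset.card_insert_le z ({x'} : Finset W)
      have c3 := Finset.card_insert_le y ({z, x'} : Finset W)
      have c4 := Finset.card_insert_le x ({y, z, x'} : Finset W)
      have : Fintype.card W = (Finset.univ : Finset W).card := rfl
      omega
    have := h3.1
    omega
  have e : W ≃ Fin 4 := Fintype.equivFinOfCardEq hcard
  refine ⟨⟨e, ?_⟩⟩
  intro a b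
  simp only [SimpleGraph.top_adj]
  constructor
  · intro h
    exact hadjall a b (fun hab => h (congrArg e hab))
  · intro h he
    exact G.ne_of_adj h (e.injective he)
set_option maxHeartbeats 1000000 in
lemma prism_case (hcub : ∀ v, G.degree v = 3) (h3 : ThreeConnected G)
    {x y z x' y' z' : W}
    (hx : ∀ u, G.Adj x u ↔ u = y ∨ u = z ∨ u = x')
    (hy : ∀ u, G.Adj y u ↔ u = x ∨ u = z ∨ u = y')
    (hz : ∀ u, G.Adj z u ↔ u = x ∨ u = y ∨ u = z')
    (hx'y : x' ≠ y) (hx'z : x' ≠ z) (hy'x : y' ≠ x) (hy'z : y' ≠ z)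
    (hz'x : z' ≠ x) (hz'y : z' ≠ y)
    (hx'y' : x' ≠ y') (hx'z' : x' ≠ z') (hy'z' : y' ≠ z')
    (e1 : G.Adj x' y') (e2 : G.Adj x' z') (e3 : G.Adj y' z') :
    Nonempty (G ≃g prism) := by
  classical
  have axy : G.Adj x y := (hx y).2 (Or.inl rfl)
  have axz : G.Adj x z := (hx z).2 (Or.inr (Or.inl rfl))
  have axx' : G.Adj x x' := (hx x').2 (Or.inr (Or.inr rfl))
  have ayz : G.Adj y z := (hy z).2 (Or.inr (Or.inl rfl))
  have ayy' : G.Adj y y' := (hy y').2 (Or.inr (Or.inr rfl))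
  have azz' : G.Adj z z' := (hz z').2 (Or.inr (Or.inr rfl))
  have hy'y : y' ≠ y := (G.ne_of_adj ayy').symm
  have hz'z : z' ≠ z := (G.ne_of_adj azz').symm
  have hx'x : x' ≠ x := (G.ne_of_adj axx').symm
  have nxy' : ¬ G.Adj x y' := by
    intro h; rcases (hx y').1 h with h'|h'|h'
    · exact hy'y h'
    · exact hy'z h'
    · exact hx'y' h'.symm
  have nxz' : ¬ G.Adj x z' := by
    intro h; rcases (hx z').1 h with h'|h'|h'
    · exact hz'y h'
    · exact hz'z h'
    · exact hx'z' h'.symm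
  have nyx' : ¬ G.Adj y x' := by
    intro h; rcases (hy x').1 h with h'|h'|h'
    · exact hx'x h'
    · exact hx'z h'
    · exact hx'y' h'
  have nyz' : ¬ G.Adj y z' := by
    intro h; rcases (hy z').1 h with h'|h'|h'
    · exact hz'x h'
    · exact hz'z h'
    · exact hy'z' h'.symm
  have nzx' : ¬ G.Adj z x' := by
    intro h; rcases (hz x').1 h with h'|h'|h'
    · exact hx'x h'
    · exact hx'y h'
    · exact hx'z' h'
  have nzy' : ¬ G.Adj z y' := by
    intro h; rcases (hz y').1 h with h'|h'|h'
    · exact hy'x h'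
    · exact hy'y h'
    · exact hy'z' h'
  have hx' : ∀ u, G.Adj x' u ↔ u = x ∨ u = y' ∨ u = z' := by
    obtain ⟨c, hcx, hcy', hch⟩ := third_nbr G hcub axx'.symm e1 hy'x.symm
    rcases (hch z').1 e2 with h|h|h
    · exact absurd h hz'x
    · exact absurd h.symm hy'z'
    · exact h ▸ hch
  have hy' : ∀ u, G.Adj y' u ↔ u = y ∨ u = x' ∨ u = z' := by
    obtain ⟨c, hcy, hcx', hch⟩ := third_nbr G hcub ayy'.symm e1.symm hx'y.symm
    rcases (hch z').1 e3 with h|h|h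
    · exact absurd h hz'y
    · exact absurd h.symm hx'z'
    · exact h ▸ hch
  have hz' : ∀ u, G.Adj z' u ↔ u = z ∨ u = x' ∨ u = y' := by
    obtain ⟨c, hcz, hcx', hch⟩ := third_nbr G hcub azz'.symm e2.symm hx'z.symm
    rcases (hch y').1 e3.symm with h|h|h
    · exact absurd h hy'z
    · exact absurd h.symm hx'y'
    · exact h ▸ hch
  set A : Set W := {x, y, z, x', y', z'} with hA
  have hmemA : ∀ u, u ∈ A ↔ u = x ∨ u = y ∨ u = z ∨ u = x' ∨ u = y' ∨ u = z' := by
    intro u; simp [hA]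
  have hclosed : ∀ u ∈ A, ∀ v, G.Adj u v → v ∈ (∅ : Set W) ∨ v ∈ A := by
    intro u hu v hadj
    rw [hmemA] at hu
    rw [hmemA]
    rcases hu with rfl|rfl|rfl|rfl|rfl|rfl
    · rcases (hx v).1 hadj with rfl|rfl|rfl <;> tauto
    · rcases (hy v).1 hadj with rfl|rfl|rfl <;> tauto
    · rcases (hz v).1 hadj with rfl|rfl|rfl <;> tauto
    · rcases (hx' v).1 hadj with rfl|rfl|rfl <;> tauto
    · rcases (hy' v).1 hadj with rfl|rfl|rfl <;> tauto
    · rcases (hz' v).1 hadj with rfl|rfl|rfl <;> tauto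
  have hall : ∀ v : W, v ∈ A := by
    intro v
    by_contra hv
    exact cut_lemma G h3 ∅ A (by simp) x (by rw [hmemA]; tauto)
      (fun a _ h => h) hclosed v hv (by simp)
  have hxy : x ≠ y := G.ne_of_adj axy
  have hxz : x ≠ z := G.ne_of_adj axz
  have hyz : y ≠ z := G.ne_of_adj ayz
  set f : Fin 6 → W := ![x, y, z, x', y', z'] with hf
  have hbij : Function.Bijective f := by
    constructor
    · intro i j hij
      fin_cases i <;> fin_cases j <;>
        first
          | rfl
          | exact absurd hij (by
              first
               | exact hxy | exact hxz | exact hxy.symm | exact hyz | exact hxz.symm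
               | exact hyz.symm
               | exact hx'x.symm | exact hx'y.symm | exact hx'z.symm
               | exact hy'x.symm | exact hy'y.symm | exact hy'z.symm
               | exact hz'x.symm | exact hz'y.symm | exact hz'z.symm
               | exact hx'x | exact hx'y | exact hx'z
               | exact hy'x | exact hy'y | exact hy'z
               | exact hz'x | exact hz'y | exact hz'z
               | exact hx'y' | exact hx'y'.symm | exact hx'z' | exact hx'z'.symm
               | exact hy'z' | exact hy'z'.symm)
    · intro v
      rcases (hmemA v).1 (hall v) with rfl|rfl|rfl|rfl|rfl|rfl
      · exact ⟨0, rfl⟩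
      · exact ⟨1, rfl⟩
      · exact ⟨2, rfl⟩
      · exact ⟨3, rfl⟩
      · exact ⟨4, rfl⟩
      · exact ⟨5, rfl⟩
  have key : ∀ i j : Fin 6, prism.Adj i j ↔ G.Adj (f i) (f j) := by
    have s1 := axy.symm; have s2 := axz.symm; have s3 := axx'.symm
    have s4 := ayz.symm; have s5 := ayy'.symm; have s6 := azz'.symm
    have s7 := e1.symm; have s8 := e2.symm; have s9 := e3.symm
    have n1 : ¬ G.Adj y' x := fun h => nxy' h.symm
    have n2 : ¬ G.Adj z' x := fun h => nxz' h.symm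
    have n3 : ¬ G.Adj x' y := fun h => nyx' h.symm
    have n4 : ¬ G.Adj z' y := fun h => nyz' h.symm
    have n5 : ¬ G.Adj x' z := fun h => nzx' h.symm
    have n6 : ¬ G.Adj y' z := fun h => nzy' h.symm
    have lx : ¬ G.Adj x x := G.irrefl
    have ly : ¬ G.Adj y y := G.irrefl
    have lz : ¬ G.Adj z z := G.irrefl
    have lx' : ¬ G.Adj x' x' := G.irrefl
    have ly' : ¬ G.Adj y' y' := G.irrefl
    have lz' : ¬ G.Adj z' z' := G.irrefl
    intro i j
    fin_cases i <;> fin_cases j <;>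
      first
        | exact iff_of_true (by rw [prism]; rw [SimpleGraph.fromRel_adj]; decide)
            (by assumption)
        | exact iff_of_false (by rw [prism]; rw [SimpleGraph.fromRel_adj]; decide)
            (by assumption)
  refine ⟨⟨(Equiv.ofBijective f hbij).symm, ?_⟩⟩
  intro a b
  have ha := Equiv.ofBijective_apply_symm_apply f hbij a
  have hb := Equiv.ofBijective_apply_symm_apply f hbij b
  rw [key _ _, ha, hb]
set_option maxHeartbeats 1000000 in
lemma main_body (hcub : ∀ v, G.degree v = 3) (h3 : ThreeConnected G)
    (hclaw : ¬ ∃ w u v s : W, G.Adj w u ∧ G.Adj w v ∧ G.Adj w s ∧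
      u ≠ v ∧ u ≠ s ∧ v ≠ s ∧ ¬ G.Adj u v ∧ ¬ G.Adj u s ∧ ¬ G.Adj v s)
    (hK4 : ¬ Nonempty (G ≃g (⊤ : SimpleGraph (Fin 4))))
    (hprism : ¬ Nonempty (G ≃g prism))
    {x y z x' y' z' : W}
    (hx : ∀ u, G.Adj x u ↔ u = y ∨ u = z ∨ u = x')
    (hy : ∀ u, G.Adj y u ↔ u = x ∨ u = z ∨ u = y')
    (hz : ∀ u, G.Adj z u ↔ u = x ∨ u = y ∨ u = z')
    (hx'y : x' ≠ y) (hx'z : x' ≠ z) (hy'x : y' ≠ x) (hy'z : y' ≠ z)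
    (hz'x : z' ≠ x) (hz'y : z' ≠ y) :
    ∃ a b c a' b' c' : W,
      List.Pairwise (· ≠ ·) [a, b, c, a', b', c'] ∧
      G.Adj a b ∧ G.Adj a c ∧ G.Adj b c ∧ G.Adj a a' ∧ G.Adj b b' ∧ G.Adj c c' ∧
      ¬ G.Adj a b' ∧ ¬ G.Adj a c' ∧ ¬ G.Adj b a' ∧ ¬ G.Adj b c' ∧
      ¬ G.Adj c a' ∧ ¬ G.Adj c b' ∧ ¬ G.Adj a' b' ∧ ¬ G.Adj a' c' ∧ ¬ G.Adj b' c' := by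
  have axy : G.Adj x y := (hx y).2 (Or.inl rfl)
  have axz : G.Adj x z := (hx z).2 (Or.inr (Or.inl rfl))
  have axx' : G.Adj x x' := (hx x').2 (Or.inr (Or.inr rfl))
  have ayz : G.Adj y z := (hy z).2 (Or.inr (Or.inl rfl))
  have ayy' : G.Adj y y' := (hy y').2 (Or.inr (Or.inr rfl))
  have azz' : G.Adj z z' := (hz z').2 (Or.inr (Or.inr rfl))
  have hxy : x ≠ y := G.ne_of_adj axy
  have hxz : x ≠ z := G.ne_of_adj axz
  have hyz : y ≠ z := G.ne_of_adj ayz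
  have hxx' : x ≠ x' := G.ne_of_adj axx'
  have hyy' : y ≠ y' := G.ne_of_adj ayy'
  have hzz' : z ≠ z' := G.ne_of_adj azz'
  by_cases h1 : x' = y'
  · by_cases h2 : x' = z'
    · refine absurd (k4_case G hcub h3 hx (fun u => (hy u).trans (by rw [h1])) (fun u => (hz u).trans (by rw [h2]))) hK4
    · -- diamond with poles z, x'
      have ayx' : G.Adj y x' := by rw [h1]; exact ayy'
      obtain ⟨t, htx, hty, hw⟩ := third_nbr G hcub axx'.symm ayx'.symm hxy
      exact absurd (diamond_case G hcub h3 hx (fun u => (hy u).trans (by rw [h1])) hz hw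
        hz'x hz'y htx hty (fun h => h2 h.symm)) not_false
  · by_cases h2 : x' = z'
    · have azx' : G.Adj z x' := by rw [h2]; exact azz'
      obtain ⟨t, htx, htz, hw⟩ := third_nbr G hcub axx'.symm azx'.symm hxz
      exact absurd (diamond_case G hcub h3 (fun u => (hx u).trans (by tauto))
        (fun u => (hz u).trans (by rw [h2])) hy hw hy'x hy'z htx htz
        (fun h => h1 h.symm)) not_false
    · by_cases h3' : y' = z'
      · have azy' : G.Adj z y' := by rw [h3']; exact azz'
        obtain ⟨t, hty, htz, hw⟩ := third_nbr G hcub ayy'.symm azy'.symm hyz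
        exact absurd (diamond_case G hcub h3 (fun u => (hy u).trans (by tauto))
          (fun u => (hz u).trans (by rw [h3']; tauto)) hx hw hx'y hx'z hty htz
          (fun h => h1 h)) not_false
      · -- x', y', z' pairwise distinct
        have hy'y : y' ≠ y := hyy'.symm
        have hz'z : z' ≠ z := hzz'.symm
        have hx'x : x' ≠ x := hxx'.symm
        have nxy' : ¬ G.Adj x y' := by
          intro h; rcases (hx y').1 h with h'|h'|h'
          · exact hy'y h'
          · exact hy'z h'
          · exact h1 h'.symm
        have nxz' : ¬ G.Adj x z' := by
          intro h; rcases (hx z').1 h with h'|h'|h'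
          · exact hz'y h'
          · exact hz'z h'
          · exact h2 h'.symm
        have nyx' : ¬ G.Adj y x' := by
          intro h; rcases (hy x').1 h with h'|h'|h'
          · exact hx'x h'
          · exact hx'z h'
          · exact h1 h'
        have nyz' : ¬ G.Adj y z' := by
          intro h; rcases (hy z').1 h with h'|h'|h'
          · exact hz'x h'
          · exact hz'z h'
          · exact h3' h'.symm
        have nzx' : ¬ G.Adj z x' := by
          intro h; rcases (hz x').1 h with h'|h'|h'
          · exact hx'x h'
          · exact hx'y h'
          · exact h2 h'
        have nzy' : ¬ G.Adj z y' := by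
          intro h; rcases (hz y').1 h with h'|h'|h'
          · exact hy'x h'
          · exact hy'y h'
          · exact h3' h'
        by_cases f1 : G.Adj x' y' <;> by_cases f2 : G.Adj x' z' <;> by_cases f3 : G.Adj y' z'
        · exact absurd (prism_case G hcub h3 hx hy hz hx'y hx'z hy'x hy'z hz'x hz'y
            h1 h2 h3' f1 f2 f3) hprism
        · -- claw at x' : leaves x, y', z'
          exact absurd (hclaw ⟨x', x, y', z', axx'.symm, f1, f2, hy'x.symm,
            hz'x.symm, h3', nxy', nxz', f3⟩) not_false
        · -- claw at y' : leaves y, x', z'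
          exact absurd (hclaw ⟨y', y, x', z', ayy'.symm, f1.symm, f3, hx'y.symm,
            hz'y.symm, h2, nyx', nyz', f2⟩) not_false
        · -- only edge x'y'
          exact absurd (one_edge_case G hcub h3 hclaw hx hy hz hx'y hx'z hy'x hy'z
            hz'x hz'y h1 h2 h3' f1 f2 f3) not_false
        · -- claw at z' : leaves z, x', y'
          exact absurd (hclaw ⟨z', z, x', y', azz'.symm, f2.symm, f3.symm, hx'z.symm,
            hy'z.symm, h1, nzx', nzy', f1⟩) not_false
        · -- only edge x'z' : roles X=x,Y=z,Z=y,X'=x',Y'=z',Z'=y'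
          exact absurd (one_edge_case G hcub h3 hclaw (fun u => (hx u).trans (by tauto))
            hz hy hx'z hx'y hz'x hz'y hy'x hy'z h2 h1 (fun h => h3' h.symm)
            f2 f1 (fun h => f3 h.symm)) not_false
        · -- only edge y'z' : roles X=y,Y=z,Z=x,X'=y',Y'=z',Z'=x'
          exact absurd (one_edge_case G hcub h3 hclaw (fun u => (hy u).trans (by tauto))
            (fun u => (hz u).trans (by tauto)) hx hy'z hy'x hz'y hz'x hx'y hx'z
            h3' (fun h => h1 h.symm) (fun h => h2 h.symm)
            f3 (fun h => f1 h.symm) (fun h => f2 h.symm)) not_false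
        · -- no edges: the net!
          refine ⟨x, y, z, x', y', z', ?_, axy, axz, ayz, axx', ayy', azz',
            nxy', nxz', nyx', nyz', nzx', nzy', f1, f2, f3⟩
          simp only [List.pairwise_cons, List.mem_cons, List.mem_singleton,
            List.not_mem_nil, List.Pairwise.nil, forall_eq_or_imp, forall_eq]
          exact ⟨⟨hxy, hxz, hxx', hy'x.symm, hz'x.symm, fun a h => h.elim⟩,
            ⟨hyz, hx'y.symm, hyy', hz'y.symm, fun a h => h.elim⟩,
            ⟨hx'z.symm, hy'z.symm, hzz', fun a h => h.elim⟩,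
            ⟨h1, h2, fun a h => h.elim⟩, ⟨h3', fun a h => h.elim⟩,
            ⟨fun a h => h.elim, trivial⟩⟩
theorem contains_induced_net' (hcub : ∀ v : W, G.degree v = 3) (h3 : ThreeConnected G)
    (hclaw : ¬ ∃ w u v s : W, G.Adj w u ∧ G.Adj w v ∧ G.Adj w s ∧
      u ≠ v ∧ u ≠ s ∧ v ≠ s ∧ ¬ G.Adj u v ∧ ¬ G.Adj u s ∧ ¬ G.Adj v s)
    (hK4 : ¬ Nonempty (G ≃g (⊤ : SimpleGraph (Fin 4))))
    (hprism : ¬ Nonempty (G ≃g prism)) :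
    ∃ x y z x' y' z' : W,
      List.Pairwise (· ≠ ·) [x, y, z, x', y', z'] ∧
      G.Adj x y ∧ G.Adj x z ∧ G.Adj y z ∧ G.Adj x x' ∧ G.Adj y y' ∧ G.Adj z z' ∧
      ¬ G.Adj x y' ∧ ¬ G.Adj x z' ∧ ¬ G.Adj y x' ∧ ¬ G.Adj y z' ∧
      ¬ G.Adj z x' ∧ ¬ G.Adj z y' ∧ ¬ G.Adj x' y' ∧ ¬ G.Adj x' z' ∧ ¬ G.Adj y' z' := by
  have hpos : 0 < Fintype.card W := by have := h3.1; omega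
  obtain ⟨v₀⟩ := Fintype.card_pos_iff.mp hpos
  obtain ⟨a, b, c, hab, hac, hbc, hv⟩ := nbrs3 G hcub v₀
  have hva : G.Adj v₀ a := (hv a).2 (Or.inl rfl)
  have hvb : G.Adj v₀ b := (hv b).2 (Or.inr (Or.inl rfl))
  have hvc : G.Adj v₀ c := (hv c).2 (Or.inr (Or.inr rfl))
  by_cases eab : G.Adj a b
  · obtain ⟨a2, ha2v, ha2b, hcha⟩ := third_nbr G hcub hva.symm eab (G.ne_of_adj hvb)
    obtain ⟨b2, hb2v, hb2a, hchb⟩ := third_nbr G hcub hvb.symm eab.symm (G.ne_of_adj hva)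
    exact main_body G hcub h3 hclaw hK4 hprism hv hcha hchb
      hac.symm hbc.symm ha2v ha2b hb2v hb2a
  · by_cases eac : G.Adj a c
    · obtain ⟨a2, ha2v, ha2c, hcha⟩ := third_nbr G hcub hva.symm eac (G.ne_of_adj hvc)
      obtain ⟨c2, hc2v, hc2a, hchc⟩ := third_nbr G hcub hvc.symm eac.symm (G.ne_of_adj hva)
      exact main_body G hcub h3 hclaw hK4 hprism (fun u => (hv u).trans (by tauto))
        hcha hchc hab.symm hbc ha2v ha2c hc2v hc2a
    · by_cases ebc : G.Adj b c
      · obtain ⟨b2, hb2v, hb2c, hchb⟩ := third_nbr G hcub hvb.symm ebc (G.ne_of_adj hvc)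
        obtain ⟨c2, hc2v, hc2b, hchc⟩ := third_nbr G hcub hvc.symm ebc.symm (G.ne_of_adj hvb)
        exact main_body G hcub h3 hclaw hK4 hprism (fun u => (hv u).trans (by tauto))
          hchb hchc hab hac hb2v hb2c hc2v hc2b
      · exact absurd ⟨v₀, a, b, c, hva, hvb, hvc, hab, hac, hbc, eab, eac, ebc⟩ hclaw
end


/-- Every 3-connected cubic claw-free graph other than `K₄` and the triangular prism
contains an induced net: a triangle `x, y, z` with pairwise distinct, pairwise non-adjacent
pendant vertices `x', y', z'` attached by the edges `xx', yy', zz'` only. -/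
theorem contains_induced_net {V : Type*} [Fintype V] (G : SimpleGraph V) [DecidableRel G.Adj]
    (hcub : ∀ v : V, G.degree v = 3) (h3 : ThreeConnected G) (hclaw : ClawFree G)
    (hK4 : ¬ Nonempty (G ≃g (⊤ : SimpleGraph (Fin 4))))
    (hprism : ¬ Nonempty (G ≃g prism)) :
    ∃ x y z x' y' z' : V,
      List.Pairwise (· ≠ ·) [x, y, z, x', y', z'] ∧
      G.Adj x y ∧ G.Adj x z ∧ G.Adj y z ∧ G.Adj x x' ∧ G.Adj y y' ∧ G.Adj z z' ∧
      ¬ G.Adj x y' ∧ ¬ G.Adj x z' ∧ ¬ G.Adj y x' ∧ ¬ G.Adj y z' ∧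
      ¬ G.Adj z x' ∧ ¬ G.Adj z y' ∧ ¬ G.Adj x' y' ∧ ¬ G.Adj x' z' ∧ ¬ G.Adj y' z' := by
  exact contains_induced_net' G hcub h3 hclaw hK4 hprism
end
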